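/- arXiv:1409.1728 — 7 statements merged into one kernel-verified Lean document; each statement's English description precedes it below -/
import Mathlib

section
/- Let A and B be bounded self-adjoint operators on a complex Hilbert space such that A − B is compact. Then for every continuous function φ : ℝ → ℂ, the operator φ(A) − φ(B) is compact, where φ(A) and φ(B) are defined by the continuous functional calculus for the self-adjoint operators A and B. -/
/-!
Compact operators form a norm-closed two-sided ideal, and modulo any two-sided ideal `a ≡ b`
implies `p(a) ≡ p(b)` for every polynomial `p`. The spectrum of a self-adjoint `a` lies in
`[-‖a‖, ‖a‖] ⊆ ℝ`, where Weierstrass approximates `f` uniformly by polynomials; since the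
continuous functional calculus is isometric, `f(a) - f(b)` is a norm limit of the elements
`p(a) - p(b)` of the ideal, hence belongs to it.
-/

open Polynomial Set

theorem TwoSidedIdeal.aeval_sub_aeval_mem {R A : Type*} [CommSemiring R] [Ring A] [Algebra R A]
    (I : TwoSidedIdeal A) {a b : A} (hab : a - b ∈ I) (p : R[X]) :
    aeval a p - aeval b p ∈ I := by
  rw [← I.rel_iff, ← RingCon.eq] at hab ⊢
  have hquot : I.ringCon.mkₐ R (aeval a p) = I.ringCon.mkₐ R (aeval b p) := by
    rw [← aeval_algHom_apply, ← aeval_algHom_apply]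
    exact congrArg (aeval · p) hab
  exact hquot

section CompactOperators

variable (𝕜 E : Type*) [NontriviallyNormedField 𝕜] [NormedAddCommGroup E] [NormedSpace 𝕜 E]

def compactOperatorIdeal : TwoSidedIdeal (E →L[𝕜] E) :=
  .mk' {T | IsCompactOperator T} isCompactOperator_zero (·.add ·) (·.neg)
    (fun {S T} (hT : IsCompactOperator T) => show IsCompactOperator ⇑(S * T) from hT.clm_comp S)
    (fun {T S} (hT : IsCompactOperator T) => show IsCompactOperator ⇑(T * S) from hT.comp_clm S)

variable {𝕜 E} in
@[simp]
theorem mem_compactOperatorIdeal {T : E →L[𝕜] E} :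
    T ∈ compactOperatorIdeal 𝕜 E ↔ IsCompactOperator T := by
  rw [compactOperatorIdeal, TwoSidedIdeal.mem_mk']; rfl

theorem isClosed_compactOperatorIdeal [CompleteSpace E] :
    IsClosed (compactOperatorIdeal 𝕜 E : Set (E →L[𝕜] E)) := by
  rw [compactOperatorIdeal, TwoSidedIdeal.coe_mk']
  exact isClosed_setOfPred_isCompactOperator

end CompactOperators

theorem exists_complex_polynomial_near_of_continuousOn (a b : ℝ) (f : ℝ → ℂ)
    (hf : ContinuousOn f (Icc a b)) (ε : ℝ) (hε : 0 < ε) :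
    ∃ p : ℂ[X], ∀ x ∈ Icc a b, ‖p.eval (x : ℂ) - f x‖ < ε := by
  obtain ⟨p, hp⟩ := exists_polynomial_near_of_continuousOn a b (fun x => (f x).re)
    (Complex.continuous_re.comp_continuousOn hf) (ε / 2) (by positivity)
  obtain ⟨q, hq⟩ := exists_polynomial_near_of_continuousOn a b (fun x => (f x).im)
    (Complex.continuous_im.comp_continuousOn hf) (ε / 2) (by positivity)
  refine ⟨p.map Complex.ofRealHom + C Complex.I * q.map Complex.ofRealHom, fun x hx => ?_⟩
  have hsplit : (p.map Complex.ofRealHom + C Complex.I * q.map Complex.ofRealHom).eval (x : ℂ)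
      - f x = ((p.eval x - (f x).re : ℝ) : ℂ) + Complex.I * ((q.eval x - (f x).im : ℝ) : ℂ) := by
    have hpx : (p.map Complex.ofRealHom).eval (x : ℂ) = p.eval x :=
      eval_map_apply Complex.ofRealHom x
    have hqx : (q.map Complex.ofRealHom).eval (x : ℂ) = q.eval x :=
      eval_map_apply Complex.ofRealHom x
    rw [eval_add, eval_mul, eval_C, hpx, hqx]
    conv_lhs => rw [← Complex.re_add_im (f x)]
    push_cast
    ring
  calc _ ≤ |p.eval x - (f x).re| + |q.eval x - (f x).im| := by
        rw [hsplit]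
        refine (norm_add_le _ _).trans_eq ?_
        rw [norm_mul, Complex.norm_I, one_mul, Complex.norm_real, Complex.norm_real]
        rfl
    _ < ε / 2 + ε / 2 := add_lt_add (hp x hx) (hq x hx)
    _ = ε := add_halves ε

section CStarAlgebra

variable {A : Type*} [CStarAlgebra A] {a : A}

theorem IsSelfAdjoint.re_mem_Icc_of_mem_spectrum (ha : IsSelfAdjoint a) {z : ℂ}
    (hz : z ∈ spectrum ℂ a) : z = z.re ∧ z.re ∈ Icc (-‖a‖) ‖a‖ := by
  rcases subsingleton_or_nontrivial A with hA | hA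
  · simp [spectrum.of_subsingleton] at hz
  exact ⟨ha.mem_spectrum_eq_re hz,
    abs_le.mp <| (Complex.abs_re_le_norm z).trans (spectrum.norm_le_norm_of_mem hz)⟩

theorem IsSelfAdjoint.norm_cfc_sub_aeval_le (ha : IsSelfAdjoint a) {f : ℂ → ℂ}
    (hf : ContinuousOn f (spectrum ℂ a)) {p : ℂ[X]} {M ε : ℝ} (hε : 0 ≤ ε) (haM : ‖a‖ ≤ M)
    (hp : ∀ x ∈ Icc (-M) M, ‖p.eval (x : ℂ) - f x‖ ≤ ε) :
    ‖cfc f a - aeval a p‖ ≤ ε := by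
  rw [← cfc_polynomial p a, ← cfc_sub f (p.eval ·) a]
  refine norm_cfc_le hε fun z hz => ?_
  obtain ⟨hz_real, hz_mem⟩ := ha.re_mem_Icc_of_mem_spectrum hz
  rw [norm_sub_rev, hz_real]
  exact hp _ (Icc_subset_Icc (neg_le_neg haM) haM hz_mem)

theorem TwoSidedIdeal.cfc_sub_cfc_mem (I : TwoSidedIdeal A) (hI : IsClosed (I : Set A)) {b : A}
    (ha : IsSelfAdjoint a) (hb : IsSelfAdjoint b) (hab : a - b ∈ I) {f : ℂ → ℂ}
    (hf : Continuous f) : cfc f a - cfc f b ∈ I := by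
  rw [← SetLike.mem_coe, ← hI.closure_eq, Metric.mem_closure_iff]
  intro ε hε
  obtain ⟨p, hp⟩ := exists_complex_polynomial_near_of_continuousOn (-max ‖a‖ ‖b‖) (max ‖a‖ ‖b‖)
    (fun x => f x) (hf.comp Complex.continuous_ofReal).continuousOn (ε / 3) (by positivity)
  have hpa := ha.norm_cfc_sub_aeval_le hf.continuousOn (by positivity) (le_max_left _ _)
    fun x hx => (hp x hx).le
  have hpb := hb.norm_cfc_sub_aeval_le hf.continuousOn (by positivity) (le_max_right _ _)
    fun x hx => (hp x hx).le
  refine ⟨aeval a p - aeval b p, I.aeval_sub_aeval_mem hab p, ?_⟩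
  calc dist (cfc f a - cfc f b) (aeval a p - aeval b p)
      = ‖(cfc f a - aeval a p) - (cfc f b - aeval b p)‖ := by rw [dist_eq_norm]; abel_nf
    _ ≤ ‖cfc f a - aeval a p‖ + ‖cfc f b - aeval b p‖ := norm_sub_le _ _
    _ < ε := by linarith

end CStarAlgebra

/-- If `A`, `B` are bounded self-adjoint operators on a complex Hilbert space with
`A - B` compact, then for every continuous `φ : ℝ → ℂ` the operator `φ(A) - φ(B)`
(defined via the continuous functional calculus; only the values of `φ` on the real
spectra matter) is compact. -/
theorem stmt2
    {H : Type*} [NormedAddCommGroup H] [InnerProductSpace ℂ H] [CompleteSpace H]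
    (A B : H →L[ℂ] H) (hA : IsSelfAdjoint A) (hB : IsSelfAdjoint B)
    (hAB : IsCompactOperator (⇑(A - B)))
    (φ : ℝ → ℂ) (hφ : Continuous φ) :
    IsCompactOperator
      (⇑(cfc (fun z : ℂ => φ z.re) A - cfc (fun z : ℂ => φ z.re) B)) :=
  mem_compactOperatorIdeal.mp <| (compactOperatorIdeal ℂ H).cfc_sub_cfc_mem
    (isClosed_compactOperatorIdeal ℂ H) hA hB (mem_compactOperatorIdeal.mpr hAB)
    (hφ.comp Complex.continuous_re)
end

section
/- Let ℋ and 𝒦 be complex Hilbert spaces, H₀ a bounded self-adjoint operator on ℋ, G : ℋ → 𝒦 a bounded operator, V₀ a bounded self-adjoint operator on 𝒦, and H = H₀ + G*V₀G. Let z ∈ ℂ with Im z ≠ 0, and set R(z) = (H − z)⁻¹ and R₀(z) = (H₀ − z)⁻¹. Then the operator I + G R₀(z) G* V₀ on 𝒦 is invertible, and its two-sided inverse is I − G R(z) G* V₀; that is, (I − G R(z) G* V₀)(I + G R₀(z) G* V₀) = I and (I + G R₀(z) G* V₀)(I − G R(z) G* V₀) = I. -/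
open ContinuousLinearMap

/-- For `H = H₀ + G* V₀ G` and `Im z ≠ 0`, with resolvents `R = (H - z)⁻¹`,
`R₀ = (H₀ - z)⁻¹`, the operator `I + G R₀ G* V₀` is invertible with two-sided
inverse `I - G R G* V₀`. -/
theorem stmt3
    {𝓗 𝓚 : Type*}
    [NormedAddCommGroup 𝓗] [InnerProductSpace ℂ 𝓗] [CompleteSpace 𝓗]
    [NormedAddCommGroup 𝓚] [InnerProductSpace ℂ 𝓚] [CompleteSpace 𝓚]
    (H₀ H : 𝓗 →L[ℂ] 𝓗) (G : 𝓗 →L[ℂ] 𝓚) (V₀ : 𝓚 →L[ℂ] 𝓚)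
    (hH₀ : IsSelfAdjoint H₀) (hV₀ : IsSelfAdjoint V₀)
    (hH : H = H₀ + (adjoint G).comp (V₀.comp G))
    (z : ℂ) (hz : z.im ≠ 0)
    (R R₀ : 𝓗 →L[ℂ] 𝓗)
    (hR1 : (H - z • 1) * R = 1) (hR2 : R * (H - z • 1) = 1)
    (hR01 : (H₀ - z • 1) * R₀ = 1) (hR02 : R₀ * (H₀ - z • 1) = 1) :
    IsUnit (1 + G ∘L R₀ ∘L (adjoint G) ∘L V₀) ∧
    (1 - G ∘L R ∘L (adjoint G) ∘L V₀) * (1 + G ∘L R₀ ∘L (adjoint G) ∘L V₀) = 1 ∧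
    (1 + G ∘L R₀ ∘L (adjoint G) ∘L V₀) * (1 - G ∘L R ∘L (adjoint G) ∘L V₀) = 1 := by
  set K : 𝓗 →L[ℂ] 𝓗 := (adjoint G).comp (V₀.comp G) with hK
  set B : 𝓚 →L[ℂ] 𝓚 := G ∘L R ∘L (adjoint G) ∘L V₀ with hB
  set B₀ : 𝓚 →L[ℂ] 𝓚 := G ∘L R₀ ∘L (adjoint G) ∘L V₀ with hB₀
  have key1 : R * K * R₀ = R₀ - R := by
    have h : K = (H - z • 1) - (H₀ - z • 1) := by rw [hH]; abel
    rw [h, mul_sub, sub_mul, mul_assoc R (H₀ - z • 1) R₀, hR01, mul_one,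
      hR2, one_mul]
  have key2 : R₀ * K * R = R₀ - R := by
    have h : K = (H - z • 1) - (H₀ - z • 1) := by rw [hH]; abel
    rw [h, mul_sub, sub_mul, mul_assoc R₀ (H - z • 1) R, hR1, mul_one,
      hR02, one_mul]
  have hBB : B * B₀ = G ∘L (R * K * R₀) ∘L (adjoint G) ∘L V₀ := by
    ext x
    simp [hB, hB₀, hK, mul_apply, comp_apply]
  have hBB' : B₀ * B = G ∘L (R₀ * K * R) ∘L (adjoint G) ∘L V₀ := by
    ext x
    simp [hB, hB₀, hK, mul_apply, comp_apply]
  have hsub : G ∘L (R₀ - R) ∘L (adjoint G) ∘L V₀ = B₀ - B := by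
    ext x
    simp [hB, hB₀, comp_apply]
  rw [key1] at hBB
  rw [key2] at hBB'
  rw [hsub] at hBB hBB'
  have h1 : (1 - B) * (1 + B₀) = 1 := by
    have : (1 - B) * (1 + B₀) = 1 + B₀ - B - B * B₀ := by noncomm_ring
    rw [this, hBB]; abel
  have h2 : (1 + B₀) * (1 - B) = 1 := by
    have : (1 + B₀) * (1 - B) = 1 + B₀ - B - B₀ * B := by noncomm_ring
    rw [this, hBB']; abel
  exact ⟨⟨⟨1 + B₀, 1 - B, h2, h1⟩, rfl⟩, h1, h2⟩
end

section
/- Let ℋ and 𝒦 be complex Hilbert spaces, H₀ a bounded self-adjoint operator on ℋ, G : ℋ → 𝒦 a bounded operator, V₀ a bounded self-adjoint operator on 𝒦, and H = H₀ + G*V₀G. Let z ∈ ℂ with Im z ≠ 0, set R(z) = (H − z)⁻¹, R₀(z) = (H₀ − z)⁻¹, and Y(z) = V₀ (I + G R₀(z) G* V₀)⁻¹ (the inverse exists). Then the iterated resolvent identity holds: R(z) − R₀(z) = − R₀(z) G* Y(z) G R₀(z), i.e. R(z) − R₀(z) = − (G R₀(z̄))* V₀ (I + G R₀(z) G* V₀)⁻¹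 G R₀(z). -/
open ContinuousLinearMap

/-- The iterated resolvent identity: with `H = H₀ + G* V₀ G`, `Im z ≠ 0`,
`R = (H - z)⁻¹`, `R₀ = (H₀ - z)⁻¹`, and `Y = V₀ (I + G R₀ G* V₀)⁻¹`, one has
`R - R₀ = - R₀ G* Y G R₀`. -/
theorem stmt4
    {𝓗 𝓚 : Type*}
    [NormedAddCommGroup 𝓗] [InnerProductSpace ℂ 𝓗] [CompleteSpace 𝓗]
    [NormedAddCommGroup 𝓚] [InnerProductSpace ℂ 𝓚] [CompleteSpace 𝓚]
    (H₀ H : 𝓗 →L[ℂ] 𝓗) (G : 𝓗 →L[ℂ] 𝓚) (V₀ : 𝓚 →L[ℂ] 𝓚)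
    (hH₀ : IsSelfAdjoint H₀) (hV₀ : IsSelfAdjoint V₀)
    (hH : H = H₀ + (adjoint G).comp (V₀.comp G))
    (z : ℂ) (hz : z.im ≠ 0)
    (R R₀ : 𝓗 →L[ℂ] 𝓗)
    (hR1 : (H - z • 1) * R = 1) (hR2 : R * (H - z • 1) = 1)
    (hR01 : (H₀ - z • 1) * R₀ = 1) (hR02 : R₀ * (H₀ - z • 1) = 1)
    (Y : 𝓚 →L[ℂ] 𝓚)
    (hY : Y = V₀ * Ring.inverse (1 + G ∘L R₀ ∘L (adjoint G) ∘L V₀)) :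
    R - R₀ = -(R₀ ∘L (adjoint G) ∘L Y ∘L G ∘L R₀) := by
  set A : 𝓗 →L[ℂ] 𝓗 := (adjoint G).comp (V₀.comp G) with hA
  have hdiff : (H - z • 1) - (H₀ - z • 1) = A := by rw [hH]; abel
  have h1 : R₀ - R = R₀ * A * R := by
    calc R₀ - R = R₀ * ((H - z • 1) * R) - (R₀ * (H₀ - z • 1)) * R := by
          rw [hR1, hR02, mul_one, one_mul]
      _ = R₀ * ((H - z • 1) - (H₀ - z • 1)) * R := by noncomm_ring
      _ = R₀ * A * R := by rw [hdiff]
  have h2 : R₀ - R = R * A * R₀ := by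
    calc R₀ - R = (R * (H - z • 1)) * R₀ - R * ((H₀ - z • 1) * R₀) := by
          rw [hR2, hR01, mul_one, one_mul]
      _ = R * ((H - z • 1) - (H₀ - z • 1)) * R₀ := by noncomm_ring
      _ = R * A * R₀ := by rw [hdiff]
  set T : 𝓚 →L[ℂ] 𝓚 := 1 + G ∘L R₀ ∘L (adjoint G) ∘L V₀ with hT
  set S : 𝓚 →L[ℂ] 𝓚 := 1 - G ∘L R ∘L (adjoint G) ∘L V₀ with hS
  have hR₀eq : R₀ = R + R₀ * A * R := by rw [← h1]; abel
  have hReq : R = R₀ - R * A * R₀ := by rw [← h2]; abel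
  have hTS : T * S = 1 := by
    have expand : T * S
        = 1 + G ∘L (R₀ - (R + R₀ * A * R)) ∘L ((adjoint G) ∘L V₀) := by
      simp only [hT, hS, hA, mul_def]
      ext x
      simp [ContinuousLinearMap.comp_apply, ContinuousLinearMap.sub_apply,
        ContinuousLinearMap.add_apply, mul_def]
      abel
    rw [expand, ← hR₀eq]
    simp
  have hST : S * T = 1 := by
    have expand : S * T
        = 1 + G ∘L (R₀ - (R + R * A * R₀)) ∘L ((adjoint G) ∘L V₀) := by
      simp only [hT, hS, hA, mul_def]
      ext x
      simp [ContinuousLinearMap.comp_apply, ContinuousLinearMap.sub_apply,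
        ContinuousLinearMap.add_apply, mul_def]
      abel
    have : R₀ - (R + R * A * R₀) = 0 := by
      rw [← h2]; abel
    rw [expand, this]
    simp
  have hinv : Ring.inverse T = S :=
    Ring.inverse_unit ⟨T, S, hTS, hST⟩
  have hYeq : Y = V₀ * S := by rw [hY, hinv]
  have key : Y ∘L G ∘L R₀ = V₀ ∘L G ∘L R := by
    have expand : Y ∘L G ∘L R₀ = V₀ ∘L G ∘L (R₀ - R * A * R₀) := by
      rw [hYeq, hS, hA]
      ext x
      simp [ContinuousLinearMap.comp_apply, ContinuousLinearMap.sub_apply, mul_def]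
    rw [expand, ← hReq]
  have final : R₀ ∘L (adjoint G) ∘L Y ∘L G ∘L R₀ = R₀ * A * R := by
    rw [key, hA]
    ext x
    simp [ContinuousLinearMap.comp_apply, mul_def]
  rw [final, ← h1]
  abel
end

section
/- Let φ : ℝ → ℂ be a continuously differentiable function and C > 0 a constant such that |φ(x)| ≤ C/(1 + |x|) and |φ'(x)| ≤ C/(1 + |x|)² for all x ∈ ℝ. Then the function (x, y) ↦ (φ(x) − φ(y))/(x − y), defined for x ≠ y, is square integrable on ℝ², i.e. ∫_{ℝ}∫_{ℝ} |(φ(x) − φ(y))/(x − y)|² dx dy < ∞. -/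
/-!
Write `k s = (1 + s²)⁻¹`. The divided difference `D(x, y)` satisfies
`|D(x, y)|² ≤ 8 C² (k x + k y) k (x - y)`: for `|x - y| ≤ 1` the mean value theorem and the decay
of `φ'` give `|D| ≤ 2C/(1 + |x|)`, while for `|x - y| > 1` the decay of `φ` alone gives
`|D| ≤ (C/(1 + |x|) + C/(1 + |y|)) / |x - y|`. The majorant is integrable on `ℝ²` because
`(x, y) ↦ k y · k (x - y)` is the integrand of the convolution of two integrable functions.
-/

open MeasureTheory

lemma div_one_add_abs_sq_le (C x : ℝ) : (C / (1 + |x|)) ^ 2 ≤ C ^ 2 * (1 + x ^ 2)⁻¹ := by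
  rw [div_pow, div_eq_mul_inv]
  gcongr
  nlinarith [abs_nonneg x, sq_abs x]

lemma one_le_two_mul_inv_one_add_sq {s : ℝ} (hs : |s| ≤ 1) : 1 ≤ 2 * (1 + s ^ 2)⁻¹ := by
  rw [← div_eq_mul_inv, le_div_iff₀ (by positivity)]
  nlinarith [sq_abs s, abs_nonneg s]

lemma inv_sq_le_two_mul_inv_one_add_sq {s : ℝ} (hs : 1 < |s|) :
    (s ^ 2)⁻¹ ≤ 2 * (1 + s ^ 2)⁻¹ := by
  rw [← div_eq_mul_inv, inv_eq_one_div, div_le_div_iff₀ (by nlinarith [sq_abs s]) (by positivity)]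
  nlinarith [sq_abs s]

section DecayBounds

variable {E : Type*} [NormedAddCommGroup E] [NormedSpace ℝ E] {φ : ℝ → E} {C : ℝ}

lemma norm_sub_le_of_norm_deriv_le_div_sq (hC : 0 ≤ C) (hφ : Differentiable ℝ φ)
    (hφ' : ∀ t, ‖deriv φ t‖ ≤ C / (1 + |t|) ^ 2) {x y : ℝ} (hxy : |x - y| ≤ 1) :
    ‖φ x - φ y‖ ≤ 2 * C / (1 + |x|) * |x - y| := by
  have hbound : ∀ t ∈ Set.uIcc y x, ‖deriv φ t‖ ≤ 2 * C / (1 + |x|) := by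
    intro t ht
    have hxt : |x| ≤ |t| + 1 := by
      have := Set.abs_sub_right_of_mem_uIcc ht
      linarith [abs_sub_abs_le_abs_sub x t, abs_sub_comm t x]
    refine (hφ' t).trans ?_
    rw [div_le_div_iff₀ (by positivity) (by positivity)]
    nlinarith [mul_le_mul_of_nonneg_left hxt hC, mul_nonneg hC (abs_nonneg t),
      mul_nonneg hC (sq_nonneg |t|)]
  simpa [Real.norm_eq_abs] using Convex.norm_image_sub_le_of_norm_deriv_le
    (fun t _ => hφ t) hbound (convex_uIcc y x) Set.left_mem_uIcc Set.right_mem_uIcc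

lemma sq_norm_sub_div_abs_sub_le (hC : 0 ≤ C) (hφ : Differentiable ℝ φ)
    (hφ₀ : ∀ t, ‖φ t‖ ≤ C / (1 + |t|)) (hφ' : ∀ t, ‖deriv φ t‖ ≤ C / (1 + |t|) ^ 2) (x y : ℝ) :
    (‖φ x - φ y‖ / |x - y|) ^ 2 ≤
      8 * C ^ 2 * (((1 + x ^ 2)⁻¹ + (1 + y ^ 2)⁻¹) * (1 + (x - y) ^ 2)⁻¹) := by
  rcases eq_or_ne x y with rfl | hne
  · rw [sub_self, sub_self, abs_zero, div_zero, zero_pow two_ne_zero]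
    positivity
  have hs : 0 < |x - y| := abs_pos.mpr (sub_ne_zero.mpr hne)
  rcases le_or_gt |x - y| 1 with hnear | hfar
  · have hq : ‖φ x - φ y‖ / |x - y| ≤ 2 * C / (1 + |x|) :=
      (div_le_iff₀ hs).mpr (norm_sub_le_of_norm_deriv_le_div_sq hC hφ hφ' hnear)
    calc (‖φ x - φ y‖ / |x - y|) ^ 2 ≤ (2 * C / (1 + |x|)) ^ 2 :=
          pow_le_pow_left₀ (by positivity) hq 2
      _ = 4 * (C / (1 + |x|)) ^ 2 * 1 := by ring
      _ ≤ 4 * (C ^ 2 * (1 + x ^ 2)⁻¹) * (2 * (1 + (x - y) ^ 2)⁻¹) := by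
          gcongr
          · exact div_one_add_abs_sq_le C x
          · exact one_le_two_mul_inv_one_add_sq hnear
      _ = 8 * C ^ 2 * ((1 + x ^ 2)⁻¹ * (1 + (x - y) ^ 2)⁻¹) := by ring
      _ ≤ _ := by gcongr; linarith [inv_nonneg.mpr (by positivity : (0 : ℝ) ≤ 1 + y ^ 2)]
  · have hq : ‖φ x - φ y‖ / |x - y| ≤ (C / (1 + |x|) + C / (1 + |y|)) / |x - y| :=
      div_le_div_of_nonneg_right ((norm_sub_le _ _).trans (add_le_add (hφ₀ x) (hφ₀ y))) hs.le
    calc (‖φ x - φ y‖ / |x - y|) ^ 2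
        ≤ (C / (1 + |x|) + C / (1 + |y|)) ^ 2 * ((x - y) ^ 2)⁻¹ := by
          rw [← sq_abs (x - y), ← inv_pow, ← mul_pow, ← div_eq_mul_inv]
          exact pow_le_pow_left₀ (by positivity) hq 2
      _ ≤ 2 * (C ^ 2 * (1 + x ^ 2)⁻¹ + C ^ 2 * (1 + y ^ 2)⁻¹) * (2 * (1 + (x - y) ^ 2)⁻¹) := by
          gcongr ?_ * ?_
          · nlinarith [div_one_add_abs_sq_le C x, div_one_add_abs_sq_le C y,
              sq_nonneg (C / (1 + |x|) - C / (1 + |y|))]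
          · exact inv_sq_le_two_mul_inv_one_add_sq hfar
      _ = 4 * C ^ 2 * (((1 + x ^ 2)⁻¹ + (1 + y ^ 2)⁻¹) * (1 + (x - y) ^ 2)⁻¹) := by ring
      _ ≤ _ := by gcongr; norm_num

end DecayBounds

lemma integrable_add_inv_one_add_sq_mul_inv_one_add_sq_sub :
    Integrable (fun p : ℝ × ℝ =>
      ((1 + p.1 ^ 2)⁻¹ + (1 + p.2 ^ 2)⁻¹) * (1 + (p.1 - p.2) ^ 2)⁻¹) := by
  have h : Integrable (fun p : ℝ × ℝ => (1 + p.2 ^ 2)⁻¹ * (1 + (p.1 - p.2) ^ 2)⁻¹)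
      (volume.prod volume) :=
    integrable_inv_one_add_sq.convolution_integrand (ContinuousLinearMap.mul ℝ ℝ)
      integrable_inv_one_add_sq
  rw [Measure.volume_eq_prod]
  refine (h.swap.add h).congr (ae_of_all _ fun p => ?_)
  simp only [Function.comp_apply, Prod.fst_swap, Prod.snd_swap, Pi.add_apply]
  rw [← neg_sub p.1 p.2, neg_sq, add_mul]

/-- If `φ : ℝ → ℂ` is continuously differentiable with `|φ(x)| ≤ C/(1+|x|)` and
`|φ'(x)| ≤ C/(1+|x|)²`, then the divided difference `(φ(x)-φ(y))/(x-y)` is square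
integrable on `ℝ²`. -/
theorem stmt7 (φ : ℝ → ℂ) (C : ℝ) (hC : 0 < C) (hφ : ContDiff ℝ 1 φ)
    (h1 : ∀ x : ℝ, ‖φ x‖ ≤ C / (1 + |x|))
    (h2 : ∀ x : ℝ, ‖deriv φ x‖ ≤ C / (1 + |x|) ^ 2) :
    MeasureTheory.Integrable
      (fun p : ℝ × ℝ => ‖(φ p.1 - φ p.2) / ((p.1 : ℂ) - (p.2 : ℂ))‖ ^ 2) := by
  have hmeas : Measurable
      (fun p : ℝ × ℝ => ‖(φ p.1 - φ p.2) / ((p.1 : ℂ) - (p.2 : ℂ))‖ ^ 2) := by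
    have := hφ.continuous.measurable
    fun_prop
  refine (integrable_add_inv_one_add_sq_mul_inv_one_add_sq_sub.const_mul (8 * C ^ 2)).mono'
    hmeas.aestronglyMeasurable (ae_of_all _ fun p => ?_)
  rw [Real.norm_of_nonneg (by positivity), norm_div, ← Complex.ofReal_sub, Complex.norm_real,
    Real.norm_eq_abs]
  exact sq_norm_sub_div_abs_sub_le hC.le (hφ.differentiable one_ne_zero) h1 h2 p.1 p.2
end

section
/- Let X be a normed vector space over ℝ or ℂ, let γ ∈ (0,1), and let C₁, C₂, R > 0. Let F : ℝ → X satisfy F(0) = 0 and ‖F(λ) − F(μ)‖ ≤ C₁ |λ − μ|^γ for all λ, μ ∈ ℝ. Let ψ : ℝ → ℝ be bounded, satisfy |ψ(x) − ψ(y)| ≤ C₂ |x − y|^γ for all x, y ∈ ℝ, and be constant on [R, ∞) and constant on (−∞, −R]. Then there exists a constant C' (depending only on C₁, C₂, R, γ and the supremum of |ψ|) such that for every ε > 0 and all λ₁, λ₂ ∈ ℝ: ‖ψ(λ₂/ε) · F(λ₂) − ψ(λ₁/ε) · F(λ₁)‖ ≤ C' |λ₂ − λ₁|^γ. -/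
/-!
Write `ψ(λ₂/ε) F(λ₂) - ψ(λ₁/ε) F(λ₁) = ψ(λ₂/ε) (F(λ₂) - F(λ₁)) + (ψ(λ₂/ε) - ψ(λ₁/ε)) F(λ₁)`.
The first term is at most `M C₁ |λ₂ - λ₁|^γ`. The second vanishes unless `|λ₁| ≤ Rε + |λ₂ - λ₁|`,
because `ψ` is constant on both tails; then `‖F(λ₁)‖ ≤ C₁ ((Rε)^γ + |λ₂ - λ₁|^γ)` by subadditivity
of `t ↦ t^γ`. Against `(Rε)^γ` we use the Hölder bound `C₂ |λ₂ - λ₁|^γ / ε^γ` on the difference of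
the `ψ`-values, which cancels `ε`; against `|λ₂ - λ₁|^γ` we use the bound `2M`.
-/

open Real

lemma abs_le_add_abs_sub_of_apply_ne {ψ : ℝ → ℝ} {R : ℝ}
    (hψp : ∀ x, R ≤ x → ψ x = ψ R) (hψm : ∀ x, x ≤ -R → ψ x = ψ (-R))
    {x y : ℝ} (hne : ψ x ≠ ψ y) : |y| ≤ R + |x - y| := by
  by_contra! hlt
  apply hne
  rcases lt_abs.mp hlt with hy | hy
  · rw [hψp x (by linarith [neg_abs_le (x - y)]), hψp y (by linarith [abs_nonneg (x - y)])]
  · rw [hψm x (by linarith [le_abs_self (x - y)]), hψm y (by linarith [abs_nonneg (x - y)])]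

lemma abs_sub_comp_div_le {ψ : ℝ → ℝ} {C γ : ℝ}
    (hψH : ∀ x y, |ψ x - ψ y| ≤ C * |x - y| ^ γ) {ε : ℝ} (hε : 0 < ε) (a b : ℝ) :
    |ψ (a / ε) - ψ (b / ε)| ≤ C * |a - b| ^ γ / ε ^ γ := by
  have h := hψH (a / ε) (b / ε)
  rwa [div_sub_div_same, abs_div, abs_of_pos hε, div_rpow (abs_nonneg _) hε.le,
    ← mul_div_assoc] at h

section RescaledCutoff

variable {X : Type*} [NormedAddCommGroup X] [NormedSpace ℝ X]
  {γ C₁ C₂ R M : ℝ} {F : ℝ → X} {ψ : ℝ → ℝ}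

lemma norm_smul_sub_le_of_holder (hF : ∀ x y, ‖F x - F y‖ ≤ C₁ * |x - y| ^ γ)
    (hψbd : ∀ x, |ψ x| ≤ M) (c x y : ℝ) :
    ‖ψ c • (F x - F y)‖ ≤ M * (C₁ * |x - y| ^ γ) := by
  rw [norm_smul, Real.norm_eq_abs]
  exact mul_le_mul (hψbd c) (hF x y) (norm_nonneg _) ((abs_nonneg _).trans (hψbd c))

lemma norm_sub_comp_div_smul_le (hγ0 : 0 ≤ γ) (hγ1 : γ ≤ 1) (hC₁ : 0 ≤ C₁) (hC₂ : 0 ≤ C₂)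
    (hR : 0 ≤ R) (hF0 : F 0 = 0) (hF : ∀ x y, ‖F x - F y‖ ≤ C₁ * |x - y| ^ γ)
    (hψbd : ∀ x, |ψ x| ≤ M) (hψH : ∀ x y, |ψ x - ψ y| ≤ C₂ * |x - y| ^ γ)
    (hψp : ∀ x, R ≤ x → ψ x = ψ R) (hψm : ∀ x, x ≤ -R → ψ x = ψ (-R))
    {ε : ℝ} (hε : 0 < ε) (a b : ℝ) :
    ‖(ψ (a / ε) - ψ (b / ε)) • F b‖ ≤ C₁ * (C₂ * R ^ γ + 2 * M) * |a - b| ^ γ := by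
  set d := |ψ (a / ε) - ψ (b / ε)|
  set t := |a - b| ^ γ
  rw [norm_smul, Real.norm_eq_abs]
  by_cases heq : ψ (a / ε) = ψ (b / ε)
  · rw [heq, sub_self, abs_zero, zero_mul]
    have hM : 0 ≤ M := (abs_nonneg _).trans (hψbd 0)
    positivity
  have hb : |b| ≤ R * ε + |a - b| := by
    have h := abs_le_add_abs_sub_of_apply_ne hψp hψm heq
    rwa [div_sub_div_same, abs_div, abs_div, abs_of_pos hε, div_le_iff₀ hε, add_mul,
      div_mul_cancel₀ _ hε.ne'] at h
  have hFb : ‖F b‖ ≤ C₁ * (R ^ γ * ε ^ γ + t) := by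
    calc ‖F b‖ ≤ C₁ * |b| ^ γ := by simpa [hF0] using hF b 0
      _ ≤ C₁ * (R * ε + |a - b|) ^ γ := by gcongr
      _ ≤ C₁ * ((R * ε) ^ γ + t) := by
        gcongr
        exact rpow_add_le_add_rpow (by positivity) (abs_nonneg _) hγ0 hγ1
      _ = C₁ * (R ^ γ * ε ^ γ + t) := by rw [mul_rpow hR hε.le]
  have hd_holder : d ≤ C₂ * t / ε ^ γ := abs_sub_comp_div_le hψH hε a b
  have hd_bound : d ≤ 2 * M := by
    linarith [abs_sub (ψ (a / ε)) (ψ (b / ε)), hψbd (a / ε), hψbd (b / ε)]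
  have hεγ : 0 < ε ^ γ := rpow_pos_of_pos hε γ
  calc d * ‖F b‖ ≤ d * (C₁ * (R ^ γ * ε ^ γ + t)) := by gcongr
    _ = d * (C₁ * R ^ γ * ε ^ γ) + d * (C₁ * t) := by ring
    _ ≤ C₂ * t / ε ^ γ * (C₁ * R ^ γ * ε ^ γ) + 2 * M * (C₁ * t) := by gcongr
    _ = C₁ * (C₂ * R ^ γ + 2 * M) * t := by field_simp

end RescaledCutoff

/-- If `F : ℝ → X` is Hölder of order `γ ∈ (0,1)` with `F 0 = 0`, and `ψ : ℝ → ℝ`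
is bounded, Hölder of order `γ`, and constant on `[R,∞)` and on `(-∞,-R]`, then
the products `λ ↦ ψ(λ/ε) • F(λ)` are Hölder of order `γ` uniformly in `ε > 0`. -/
theorem stmt8 {X : Type*} [NormedAddCommGroup X] [NormedSpace ℝ X]
    (γ : ℝ) (hγ : γ ∈ Set.Ioo (0 : ℝ) 1)
    (C₁ C₂ R M : ℝ) (hC₁ : 0 < C₁) (hC₂ : 0 < C₂) (hR : 0 < R)
    (F : ℝ → X) (hF0 : F 0 = 0)
    (hF : ∀ lam mu : ℝ, ‖F lam - F mu‖ ≤ C₁ * |lam - mu| ^ γ)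
    (ψ : ℝ → ℝ) (hψbd : ∀ x : ℝ, |ψ x| ≤ M)
    (hψH : ∀ x y : ℝ, |ψ x - ψ y| ≤ C₂ * |x - y| ^ γ)
    (hψp : ∀ x : ℝ, R ≤ x → ψ x = ψ R)
    (hψm : ∀ x : ℝ, x ≤ -R → ψ x = ψ (-R)) :
    ∃ C' : ℝ, ∀ ε : ℝ, 0 < ε → ∀ lam₁ lam₂ : ℝ,
      ‖ψ (lam₂ / ε) • F lam₂ - ψ (lam₁ / ε) • F lam₁‖ ≤ C' * |lam₂ - lam₁| ^ γ := by
  refine ⟨C₁ * (3 * M + C₂ * R ^ γ), fun ε hε lam₁ lam₂ => ?_⟩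
  calc ‖ψ (lam₂ / ε) • F lam₂ - ψ (lam₁ / ε) • F lam₁‖
      = ‖ψ (lam₂ / ε) • (F lam₂ - F lam₁) + (ψ (lam₂ / ε) - ψ (lam₁ / ε)) • F lam₁‖ := by
        rw [smul_sub, sub_smul, sub_add_sub_cancel]
    _ ≤ ‖ψ (lam₂ / ε) • (F lam₂ - F lam₁)‖ + ‖(ψ (lam₂ / ε) - ψ (lam₁ / ε)) • F lam₁‖ :=
        norm_add_le _ _
    _ ≤ M * (C₁ * |lam₂ - lam₁| ^ γ) + C₁ * (C₂ * R ^ γ + 2 * M) * |lam₂ - lam₁| ^ γ :=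
        add_le_add (norm_smul_sub_le_of_holder hF hψbd _ _ _)
          (norm_sub_comp_div_smul_le hγ.1.le hγ.2.le hC₁.le hC₂.le hR.le
            hF0 hF hψbd hψH hψp hψm hε _ _)
    _ = C₁ * (3 * M + C₂ * R ^ γ) * |lam₂ - lam₁| ^ γ := by ring
end

section
/- Let R > 0 and let ψ : ℝ → ℝ be a smooth (C^∞) function such that ψ(x) = 1/2 for all x ≤ −R and ψ(x) = −1/2 for all x ≥ R. Let a > 0. Then there exist constants C > 0 and ε₀ ∈ (0,1) such that for all ε ∈ (0, ε₀): | ∫_{−a}^{a} ∫_{−a}^{a} ( (ψ(x/ε) − ψ(y/ε)) / (x − y) )² dx dy − 2 log(1/ε) | ≤ C. In other words, the double integral equals 2|log ε| + O(1) as ε → 0⁺. -/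
open MeasureTheory intervalIntegral Set

lemma aux_ii {f : ℝ → ℝ} (hm : Measurable f) {C : ℝ} (hC : ∀ x, |f x| ≤ C) (c d : ℝ) :
    IntervalIntegrable f volume c d := by
  rw [intervalIntegrable_iff]
  refine MeasureTheory.Integrable.mono' (g := fun _ => C)
    (integrableOn_const measure_Ioc_lt_top.ne) hm.aestronglyMeasurable ?_
  exact Filter.Eventually.of_forall fun x => hC x

lemma aux_min_meas (A B : ℝ) : Measurable (fun s : ℝ => min (A^2) ((B/s)^2)) :=
  measurable_const.min ((measurable_const.div measurable_id).pow_const 2)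

lemma aux_min_abs (A B : ℝ) (s : ℝ) : |min (A^2) ((B/s)^2)| ≤ A^2 := by
  rw [abs_of_nonneg (le_min (sq_nonneg A) (sq_nonneg _))]
  exact min_le_left _ _

lemma aux_min_int {A B S : ℝ} (hA : 0 < A) (hB : 0 < B) (hS : 0 ≤ S) :
    ∫ s in (0:ℝ)..S, min (A^2) ((B/s)^2) ≤ 2*(A*B) := by
  have hii : ∀ c d : ℝ, IntervalIntegrable (fun s : ℝ => min (A^2) ((B/s)^2)) volume c d :=
    aux_ii (aux_min_meas A B) (aux_min_abs A B)
  have hBA : 0 < B/A := div_pos hB hA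
  have hAB : 0 ≤ A*B := by positivity
  rcases le_or_gt S (B/A) with hcase | hcase
  · calc ∫ s in (0:ℝ)..S, min (A^2) ((B/s)^2)
        ≤ ∫ _ in (0:ℝ)..S, A^2 := by
          refine integral_mono_on hS (hii 0 S) _root_.intervalIntegrable_const ?_
          exact fun x _ => min_le_left _ _
      _ = S * A^2 := by simp [mul_comm]
      _ ≤ (B/A) * A^2 := by nlinarith [sq_nonneg A]
      _ ≤ 2*(A*B) := by
          rw [div_mul_eq_mul_div, sq, ← mul_assoc, mul_div_assoc, div_self (ne_of_gt hA)]
          nlinarith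
  · have hsplit : (∫ s in (0:ℝ)..(B/A), min (A^2) ((B/s)^2))
        + (∫ s in (B/A)..S, min (A^2) ((B/s)^2))
        = ∫ s in (0:ℝ)..S, min (A^2) ((B/s)^2) :=
      integral_add_adjacent_intervals (hii 0 (B/A)) (hii (B/A) S)
    rw [← hsplit]
    have h1 : (∫ s in (0:ℝ)..(B/A), min (A^2) ((B/s)^2)) ≤ A*B := by
      calc (∫ s in (0:ℝ)..(B/A), min (A^2) ((B/s)^2))
          ≤ ∫ _ in (0:ℝ)..(B/A), A^2 := by
            refine integral_mono_on hBA.le (hii _ _) _root_.intervalIntegrable_const ?_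
            exact fun x _ => min_le_left _ _
        _ = (B/A) * A^2 := by simp [mul_comm]
        _ = A*B := by field_simp
    have hcont : ContinuousOn (fun s : ℝ => (B/s)^2) (Set.uIcc (B/A) S) := by
      rw [Set.uIcc_of_le hcase.le]
      exact (continuousOn_const.div continuousOn_id
        (fun y hy => ne_of_gt (lt_of_lt_of_le hBA hy.1))).pow 2
    have h2 : (∫ s in (B/A)..S, min (A^2) ((B/s)^2)) ≤ A*B := by
      have hb2 : (∫ s in (B/A)..S, (B/s)^2) = A*B - B^2/S := by
        have hft : ∀ x ∈ Set.uIcc (B/A) S, HasDerivAt (fun s : ℝ => -(B^2/s)) ((B/x)^2) x := by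
          intro x hx
          rw [Set.uIcc_of_le hcase.le] at hx
          have hx0 : x ≠ 0 := ne_of_gt (lt_of_lt_of_le hBA hx.1)
          have h0 : HasDerivAt (fun s : ℝ => s⁻¹) (-1/x^2) x := by
            exact ((hasDerivAt_id x).inv hx0).congr_deriv (by simp)
          have h5 : HasDerivAt (fun s : ℝ => -(B^2 * s⁻¹)) (-(B^2 * (-1/x^2))) x :=
            (h0.const_mul (B^2)).neg
          have heq : (fun s : ℝ => -(B^2 * s⁻¹)) = (fun s : ℝ => -(B^2/s)) := by
            funext s; rw [← div_eq_mul_inv]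
          rw [heq] at h5
          convert h5 using 1
          field_simp
        rw [integral_eq_sub_of_hasDerivAt hft (hcont.intervalIntegrable)]
        have : B^2/(B/A) = A*B := by field_simp
        rw [← this]; ring
      calc (∫ s in (B/A)..S, min (A^2) ((B/s)^2))
          ≤ ∫ s in (B/A)..S, (B/s)^2 := by
            refine integral_mono_on hcase.le (hii _ _) hcont.intervalIntegrable ?_
            exact fun x _ => min_le_right _ _
        _ = A*B - B^2/S := hb2
        _ ≤ A*B := by
            have : 0 ≤ B^2/S := by positivity
            linarith
    linarith

lemma aux_min_int_two {A B S : ℝ} (hA : 0 < A) (hB : 0 < B) (hS : 0 ≤ S) :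
    ∫ s in (-S)..S, min (A^2) ((B/s)^2) ≤ 4*(A*B) := by
  have hii : ∀ c d : ℝ, IntervalIntegrable (fun s : ℝ => min (A^2) ((B/s)^2)) volume c d :=
    aux_ii (aux_min_meas A B) (aux_min_abs A B)
  have hsplit : (∫ s in (-S)..(0:ℝ), min (A^2) ((B/s)^2))
      + (∫ s in (0:ℝ)..S, min (A^2) ((B/s)^2))
      = ∫ s in (-S)..S, min (A^2) ((B/s)^2) :=
    integral_add_adjacent_intervals (hii _ _) (hii _ _)
  have hneg : (∫ s in (-S)..(0:ℝ), min (A^2) ((B/s)^2))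
      = ∫ s in (0:ℝ)..S, min (A^2) ((B/s)^2) := by
    have h := integral_comp_neg (a := 0) (b := S) (fun s : ℝ => min (A^2) ((B/s)^2))
    simp only [neg_zero] at h
    rw [← h]
    apply integral_congr
    intro y _
    simp only [div_neg, neg_sq]
  rw [← hsplit, hneg]
  have := aux_min_int hA hB hS
  linarith

lemma aux_int_inv_sq (x c d : ℝ) (h : ∀ y ∈ Set.uIcc c d, x - y ≠ 0) :
    ∫ y in c..d, ((x-y)⁻¹)^2 = (x-d)⁻¹ - (x-c)⁻¹ := by
  have hder : ∀ y ∈ Set.uIcc c d, HasDerivAt (fun y => (x-y)⁻¹) (((x-y)⁻¹)^2) y := by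
    intro y hy
    have h1 : HasDerivAt (fun y : ℝ => x - y) (-1) y := by
      simpa using (hasDerivAt_id y).const_sub x
    have h2 := h1.inv (h y hy)
    refine h2.congr_deriv ?_
    rw [inv_pow, neg_neg, one_div]
  have hcont : ContinuousOn (fun y : ℝ => ((x-y)⁻¹)^2) (Set.uIcc c d) :=
    ((continuousOn_const.sub continuousOn_id).inv₀ h).pow 2
  rw [integral_eq_sub_of_hasDerivAt hder hcont.intervalIntegrable]

lemma aux_int_inv (p c d : ℝ) (h : ∀ x ∈ Set.uIcc c d, x + p ≠ 0) :
    ∫ x in c..d, (x+p)⁻¹ = Real.log (d+p) - Real.log (c+p) := by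
  have hder : ∀ y ∈ Set.uIcc c d, HasDerivAt (fun y => Real.log (y+p)) ((y+p)⁻¹) y := by
    intro y hy
    have h1 : HasDerivAt (fun y : ℝ => y + p) 1 y := (hasDerivAt_id y).add_const p
    have h2 := (Real.hasDerivAt_log (h y hy)).comp y h1
    exact h2.congr_deriv (mul_one _)
  have hcont : ContinuousOn (fun y : ℝ => (y+p)⁻¹) (Set.uIcc c d) :=
    (continuousOn_id.add continuousOn_const).inv₀ h
  rw [integral_eq_sub_of_hasDerivAt hder hcont.intervalIntegrable]

lemma aux_int_inv' (p c d : ℝ) (h : ∀ x ∈ Set.uIcc c d, x - p ≠ 0) :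
    ∫ x in c..d, (x-p)⁻¹ = Real.log (d-p) - Real.log (c-p) := by
  have h2 : ∀ x ∈ Set.uIcc c d, x + (-p) ≠ 0 := by
    intro x hx; simpa [sub_eq_add_neg] using h x hx
  have := aux_int_inv (-p) c d h2
  simpa [sub_eq_add_neg] using this

/-- The integrand. -/
noncomputable def auxf (ψ : ℝ → ℝ) (ε x y : ℝ) : ℝ := ((ψ (x / ε) - ψ (y / ε)) / (x - y)) ^ 2

lemma auxf_nonneg (ψ : ℝ → ℝ) (ε x y : ℝ) : 0 ≤ auxf ψ ε x y := sq_nonneg _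

lemma auxf_meas {ψ : ℝ → ℝ} (hψ : Continuous ψ) (ε : ℝ) :
    Measurable (fun p : ℝ × ℝ => auxf ψ ε p.1 p.2) := by
  unfold auxf
  have h1 : Continuous fun u : ℝ => ψ (u / ε) := hψ.comp (continuous_id.div_const ε)
  have m1 : Measurable fun p : ℝ × ℝ => ψ (p.1 / ε) - ψ (p.2 / ε) :=
    ((h1.comp continuous_fst).sub (h1.comp continuous_snd)).measurable
  have m2 : Measurable fun p : ℝ × ℝ => p.1 - p.2 :=
    (continuous_fst.sub continuous_snd).measurable
  exact (m1.div m2).pow_const 2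

lemma auxf_meas_x {ψ : ℝ → ℝ} (hψ : Continuous ψ) (ε x : ℝ) :
    Measurable (auxf ψ ε x) := by
  unfold auxf
  have h1 : Continuous fun u : ℝ => ψ (u / ε) := hψ.comp (continuous_id.div_const ε)
  have m1 : Measurable fun y : ℝ => ψ (x / ε) - ψ (y / ε) :=
    (continuous_const.sub h1).measurable
  have m2 : Measurable fun y : ℝ => x - y :=
    (continuous_const.sub continuous_id).measurable
  exact (m1.div m2).pow_const 2

lemma auxf_le_A {ψ : ℝ → ℝ} {L ε : ℝ} (hε0 : 0 < ε)
    (hL : ∀ u v : ℝ, |ψ u - ψ v| ≤ L * |u - v|) (x y : ℝ) :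
    auxf ψ ε x y ≤ (L/ε)^2 := by
  by_cases hxy : x = y
  · subst hxy
    unfold auxf
    simp only [sub_self, zero_div]
    norm_num
    positivity
  · have h0 : 0 < |x - y| := abs_pos.2 (sub_ne_zero.2 hxy)
    have h1 : |ψ (x/ε) - ψ (y/ε)| ≤ (L/ε) * |x - y| := by
      have h2 := hL (x/ε) (y/ε)
      rw [div_sub_div_same, abs_div, abs_of_pos hε0] at h2
      calc |ψ (x/ε) - ψ (y/ε)| ≤ L * (|x - y| / ε) := h2
        _ = (L/ε) * |x - y| := by ring
    have h3 : |(ψ (x/ε) - ψ (y/ε)) / (x - y)| ≤ L/ε := by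
      rw [abs_div, div_le_iff₀ h0]
      exact h1
    calc auxf ψ ε x y = |(ψ (x/ε) - ψ (y/ε)) / (x - y)|^2 := (sq_abs _).symm
      _ ≤ (L/ε)^2 := by
          apply pow_le_pow_left₀ (abs_nonneg _) h3

lemma auxf_le_B {ψ : ℝ → ℝ} {M ε : ℝ} (hM0 : 0 < M)
    (hM : ∀ u v : ℝ, |ψ u - ψ v| ≤ 2*M) (x y : ℝ) :
    auxf ψ ε x y ≤ ((2*M)/(x-y))^2 := by
  by_cases hxy : x = y
  · subst hxy
    unfold auxf
    simp [sub_self]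
  · have h0 : 0 < |x - y| := abs_pos.2 (sub_ne_zero.2 hxy)
    have h1 : |(ψ (x/ε) - ψ (y/ε)) / (x - y)| ≤ (2*M) / |x-y| := by
      rw [abs_div]
      gcongr
      · exact hM _ _
    calc auxf ψ ε x y = |(ψ (x/ε) - ψ (y/ε)) / (x - y)|^2 := (sq_abs _).symm
      _ ≤ ((2*M) / |x-y|)^2 := by
          apply pow_le_pow_left₀ (abs_nonneg _) h1
      _ = ((2*M)/(x-y))^2 := by
          rw [div_pow, div_pow, sq_abs]


lemma auxf_ii {ψ : ℝ → ℝ} {L ε : ℝ} (hψc : Continuous ψ) (hε0 : 0 < ε)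
    (hL : ∀ u v : ℝ, |ψ u - ψ v| ≤ L * |u - v|) (x c d : ℝ) :
    IntervalIntegrable (auxf ψ ε x) volume c d :=
  aux_ii (auxf_meas_x hψc ε x) (C := (L/ε)^2)
    (fun y => by rw [abs_of_nonneg (auxf_nonneg _ _ _ _)]; exact auxf_le_A hε0 hL x y) c d

lemma auxf_param_meas {ψ : ℝ → ℝ} (hψc : Continuous ψ) (ε c d : ℝ) (hcd : c ≤ d) :
    Measurable (fun x => ∫ y in c..d, auxf ψ ε x y) := by
  have h0 : (fun x => ∫ y in c..d, auxf ψ ε x y)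
      = fun x => ∫ y in Set.Ioc c d, auxf ψ ε x y := funext fun x => integral_of_le hcd
  rw [h0]
  exact ((auxf_meas hψc ε).stronglyMeasurable.integral_prod_right').measurable

lemma auxf_param_bound {ψ : ℝ → ℝ} {L ε : ℝ} (hε0 : 0 < ε)
    (hL : ∀ u v : ℝ, |ψ u - ψ v| ≤ L * |u - v|) (c d x : ℝ) :
    |∫ y in c..d, auxf ψ ε x y| ≤ (L/ε)^2 * |d - c| := by
  have h := intervalIntegral.norm_integral_le_of_norm_le_const (a := c) (b := d)
    (C := (L/ε)^2) (f := auxf ψ ε x) ?_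
  · simpa [Real.norm_eq_abs] using h
  · intro y _
    rw [Real.norm_eq_abs, abs_of_nonneg (auxf_nonneg _ _ _ _)]
    exact auxf_le_A hε0 hL x y

lemma auxf_param_ii {ψ : ℝ → ℝ} {L ε : ℝ} (hψc : Continuous ψ) (hε0 : 0 < ε)
    (hL : ∀ u v : ℝ, |ψ u - ψ v| ≤ L * |u - v|) (c d : ℝ) (hcd : c ≤ d) (c' d' : ℝ) :
    IntervalIntegrable (fun x => ∫ y in c..d, auxf ψ ε x y) volume c' d' :=
  aux_ii (auxf_param_meas hψc ε c d hcd) (auxf_param_bound hε0 hL c d) c' d'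

lemma auxf_inner_left {ψ : ℝ → ℝ} {L ε a b : ℝ} (hψc : Continuous ψ) (hε0 : 0 < ε)
    (hL : ∀ u v : ℝ, |ψ u - ψ v| ≤ L * |u - v|)
    (hb0 : 0 < b) (hba : b < a)
    (hpm : ∀ z : ℝ, z ≤ -b → ψ (z/ε) = 1/2) (hpp : ∀ z : ℝ, b ≤ z → ψ (z/ε) = -(1/2)) :
    ∀ x ∈ Set.Icc (-a) (-b),
      (∫ y in (-a)..a, auxf ψ ε x y)
        = (((x-a)⁻¹ - (x-b)⁻¹) + ∫ y in (-b)..b, auxf ψ ε x y) := by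
  intro x hx
  have hii := fun c d => auxf_ii hψc hε0 hL x c d
  have h1 : (∫ y in (-a)..(-b), auxf ψ ε x y) = 0 := by
    have heq : Set.EqOn (auxf ψ ε x) (fun _ => (0:ℝ)) (Set.uIcc (-a) (-b)) := by
      intro y hy
      rw [Set.uIcc_of_le (by linarith : -a ≤ -b)] at hy
      unfold auxf
      rw [hpm x hx.2, hpm y hy.2, sub_self, zero_div]
      norm_num
    rw [integral_congr heq]; simp
  have h3 : (∫ y in b..a, auxf ψ ε x y) = (x-a)⁻¹ - (x-b)⁻¹ := by
    have heq : Set.EqOn (auxf ψ ε x) (fun y => ((x-y)⁻¹)^2) (Set.uIcc b a) := by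
      intro y hy
      rw [Set.uIcc_of_le hba.le] at hy
      unfold auxf
      rw [hpm x hx.2, hpp y hy.1]
      norm_num [one_div]
    rw [integral_congr heq]
    apply aux_int_inv_sq
    intro y hy
    rw [Set.uIcc_of_le hba.le] at hy
    have hx2 := hx.2
    have hy1 := hy.1
    have : x - y < 0 := by linarith
    exact ne_of_lt this
  have s1 := integral_add_adjacent_intervals (hii (-a) (-b)) (hii (-b) b)
  have s2 := integral_add_adjacent_intervals (hii (-a) b) (hii b a)
  rw [← s2, ← s1, h1, h3]; ring

lemma auxf_inner_right {ψ : ℝ → ℝ} {L ε a b : ℝ} (hψc : Continuous ψ) (hε0 : 0 < ε)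
    (hL : ∀ u v : ℝ, |ψ u - ψ v| ≤ L * |u - v|)
    (hb0 : 0 < b) (hba : b < a)
    (hpm : ∀ z : ℝ, z ≤ -b → ψ (z/ε) = 1/2) (hpp : ∀ z : ℝ, b ≤ z → ψ (z/ε) = -(1/2)) :
    ∀ x ∈ Set.Icc b a,
      (∫ y in (-a)..a, auxf ψ ε x y)
        = (((x+b)⁻¹ - (x+a)⁻¹) + ∫ y in (-b)..b, auxf ψ ε x y) := by
  intro x hx
  have hii := fun c d => auxf_ii hψc hε0 hL x c d
  have h3 : (∫ y in b..a, auxf ψ ε x y) = 0 := by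
    have heq : Set.EqOn (auxf ψ ε x) (fun _ => (0:ℝ)) (Set.uIcc b a) := by
      intro y hy
      rw [Set.uIcc_of_le hba.le] at hy
      unfold auxf
      rw [hpp x hx.1, hpp y hy.1, sub_self, zero_div]
      norm_num
    rw [integral_congr heq]; simp
  have h1 : (∫ y in (-a)..(-b), auxf ψ ε x y) = (x+b)⁻¹ - (x+a)⁻¹ := by
    have heq : Set.EqOn (auxf ψ ε x) (fun y => ((x-y)⁻¹)^2) (Set.uIcc (-a) (-b)) := by
      intro y hy
      rw [Set.uIcc_of_le (by linarith : -a ≤ -b)] at hy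
      unfold auxf
      rw [hpp x hx.1, hpm y hy.2]
      have hnum : (-(1/2 : ℝ) - 1/2) = -1 := by norm_num
      rw [hnum, neg_div, neg_sq, one_div]
    rw [integral_congr heq]
    have := aux_int_inv_sq x (-a) (-b) ?_
    · rw [this, sub_neg_eq_add, sub_neg_eq_add]
    · intro y hy
      rw [Set.uIcc_of_le (by linarith : -a ≤ -b)] at hy
      have hx1 := hx.1
      have hy2 := hy.2
      have : 0 < x - y := by linarith
      exact ne_of_gt this
  have s1 := integral_add_adjacent_intervals (hii (-a) (-b)) (hii (-b) b)
  have s2 := integral_add_adjacent_intervals (hii (-a) b) (hii b a)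
  rw [← s2, ← s1, h1, h3]; ring

set_option maxHeartbeats 2000000 in
/-- For a smooth `ψ` equal to `1/2` on `(-∞,-R]` and `-1/2` on `[R,∞)` and `a > 0`,
the double integral `∫_{-a}^a ∫_{-a}^a ((ψ(x/ε) - ψ(y/ε))/(x-y))² dx dy` equals
`2|log ε| + O(1)` as `ε → 0⁺`. -/
theorem stmt9 (R : ℝ) (hR : 0 < R) (ψ : ℝ → ℝ) (hψ : ContDiff ℝ (⊤ : ℕ∞) ψ)
    (hψm : ∀ x : ℝ, x ≤ -R → ψ x = 1 / 2)
    (hψp : ∀ x : ℝ, R ≤ x → ψ x = -(1 / 2))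
    (a : ℝ) (ha : 0 < a) :
    ∃ C > 0, ∃ ε₀ ∈ Set.Ioo (0 : ℝ) 1, ∀ ε ∈ Set.Ioo (0 : ℝ) ε₀,
      |(∫ x in (-a)..a, ∫ y in (-a)..a, ((ψ (x / ε) - ψ (y / ε)) / (x - y)) ^ 2)
          - 2 * Real.log (1 / ε)| ≤ C := by
  have hψc : Continuous ψ := hψ.continuous
  have hψd : Differentiable ℝ ψ := hψ.differentiable (by simp)
  have hderiv_cont : Continuous (deriv ψ) := hψ.continuous_deriv (by simp)
  obtain ⟨C0, hC0⟩ := (isCompact_Icc (a := -R) (b := R)).exists_bound_of_continuousOn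
    hderiv_cont.continuousOn
  set L := max C0 1 with hLdef
  have hL1 : (0:ℝ) < L := lt_of_lt_of_le one_pos (le_max_right _ _)
  have hderiv0 : ∀ x : ℝ, (x < -R ∨ R < x) → deriv ψ x = 0 := by
    intro x hx
    rcases hx with hx | hx
    · have hev : ψ =ᶠ[nhds x] (fun _ => (1:ℝ)/2) := by
        filter_upwards [Iio_mem_nhds hx] with y hy
        exact hψm y (le_of_lt hy)
      rw [hev.deriv_eq]
      exact deriv_const x _
    · have hev : ψ =ᶠ[nhds x] (fun _ => (-(1/2) : ℝ)) := by
        filter_upwards [Ioi_mem_nhds hx] with y hy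
        exact hψp y (le_of_lt hy)
      rw [hev.deriv_eq]
      exact deriv_const x _
  have hLd : ∀ x : ℝ, ‖deriv ψ x‖ ≤ L := by
    intro x
    by_cases h1 : x < -R
    · rw [hderiv0 x (Or.inl h1)]; simp only [norm_zero]; exact hL1.le
    · by_cases h2 : R < x
      · rw [hderiv0 x (Or.inr h2)]; simp only [norm_zero]; exact hL1.le
      · exact le_trans (hC0 x ⟨by linarith, by linarith⟩) (le_max_left _ _)
  have hL : ∀ u v : ℝ, |ψ u - ψ v| ≤ L * |u - v| := by
    intro u v
    have h := convex_univ.norm_image_sub_le_of_norm_deriv_le (f := ψ)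
      (fun x _ => hψd.differentiableAt) (fun x _ => hLd x) (Set.mem_univ v) (Set.mem_univ u)
    simpa [Real.norm_eq_abs] using h
  obtain ⟨M0, hM0'⟩ := (isCompact_Icc (a := -R) (b := R)).exists_bound_of_continuousOn
    hψc.continuousOn
  set M := max M0 1 with hMdef
  have hM1 : (0:ℝ) < M := lt_of_lt_of_le one_pos (le_max_right _ _)
  have hMone : (1:ℝ) ≤ M := le_max_right M0 1
  have hMb : ∀ u : ℝ, |ψ u| ≤ M := by
    intro u
    by_cases h1 : u ≤ -R
    · rw [hψm u h1, abs_of_pos (by norm_num : (0:ℝ) < 1/2)]; linarith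
    · by_cases h2 : R ≤ u
      · rw [hψp u h2, abs_neg, abs_of_pos (by norm_num : (0:ℝ) < 1/2)]; linarith
      · refine le_trans ?_ (le_max_left M0 1)
        simpa [Real.norm_eq_abs] using hM0' u ⟨by linarith, by linarith⟩
  have hM : ∀ u v : ℝ, |ψ u - ψ v| ≤ 2*M := by
    intro u v
    rw [sub_eq_add_neg]
    refine (abs_add_le _ _).trans ?_
    rw [abs_neg]
    linarith [hMb u, hMb v]
  set Ca := 4*(|Real.log a| + |Real.log (2*a)|) + 2*|Real.log (2*a)|
    + 2*|Real.log 2| + 2*|Real.log R| with hCadef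
  have hCa0 : 0 ≤ Ca := by positivity
  refine ⟨Ca + 32*(R*(L*M)) + 1, by positivity, min (1/2) (a/(2*R)),
    ⟨lt_min (by norm_num) (by positivity), lt_of_le_of_lt (min_le_left _ _) (by norm_num)⟩, ?_⟩
  intro ε hε
  obtain ⟨hε0, hε1⟩ := hε
  have hεa : ε < a/(2*R) := lt_of_lt_of_le hε1 (min_le_right _ _)
  set b := R*ε with hbdef
  have hb0 : 0 < b := by positivity
  have h2ba : 2*b < a := by
    have h := (lt_div_iff₀ (by positivity : (0:ℝ) < 2*R)).1 hεa
    nlinarith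
  have hba : b < a := by linarith
  have hpm : ∀ z : ℝ, z ≤ -b → ψ (z/ε) = 1/2 := by
    intro z hz
    apply hψm
    rw [div_le_iff₀ hε0]
    rw [hbdef] at hz
    linarith
  have hpp : ∀ z : ℝ, b ≤ z → ψ (z/ε) = -(1/2) := by
    intro z hz
    apply hψp
    rw [le_div_iff₀ hε0]
    rw [hbdef] at hz
    linarith
  have hA0 : 0 < L/ε := by positivity
  have hB0 : 0 < 2*M := by linarith
  have hiiG := fun c d => auxf_param_ii (L := L) hψc hε0 hL (-a) a (by linarith) c d
  have hiiGm := fun c d => auxf_param_ii (L := L) hψc hε0 hL (-b) b (by linarith) c d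
  have key0 : (∫ x in (-a)..a, ∫ y in (-a)..a, ((ψ (x / ε) - ψ (y / ε)) / (x - y)) ^ 2)
      = ∫ x in (-a)..a, ∫ y in (-a)..a, auxf ψ ε x y := rfl
  rw [key0]
  -- splitting the outer integral
  have s1 := integral_add_adjacent_intervals (a := -a) (b := -b) (c := b) (μ := volume)
      (f := fun x => ∫ y in (-a)..a, auxf ψ ε x y) (hiiG _ _) (hiiG _ _)
  have s2 := integral_add_adjacent_intervals (a := -a) (b := b) (c := a) (μ := volume)
      (f := fun x => ∫ y in (-a)..a, auxf ψ ε x y) (hiiG _ _) (hiiG _ _)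
  -- left piece
  have hii1 : IntervalIntegrable (fun x : ℝ => (x-a)⁻¹) volume (-a) (-b) := by
    apply ContinuousOn.intervalIntegrable
    rw [Set.uIcc_of_le (by linarith : -a ≤ -b)]
    exact ((continuous_sub_right a).continuousOn).inv₀
      (fun x hx => by show x - a ≠ 0; have := hx.2; intro hc; nlinarith)
  have hii2 : IntervalIntegrable (fun x : ℝ => (x-b)⁻¹) volume (-a) (-b) := by
    apply ContinuousOn.intervalIntegrable
    rw [Set.uIcc_of_le (by linarith : -a ≤ -b)]
    exact ((continuous_sub_right b).continuousOn).inv₀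
      (fun x hx => by show x - b ≠ 0; have := hx.2; intro hc; nlinarith)
  have hHmii : IntervalIntegrable (fun x : ℝ => (x-a)⁻¹ - (x-b)⁻¹) volume (-a) (-b) :=
    hii1.sub hii2
  have t1 : (∫ x in (-a)..(-b), ∫ y in (-a)..a, auxf ψ ε x y)
      = (2*Real.log (a+b) - Real.log (2*a) - Real.log (2*b))
        + ∫ x in (-a)..(-b), ∫ y in (-b)..b, auxf ψ ε x y := by
    have hcg : (∫ x in (-a)..(-b), ∫ y in (-a)..a, auxf ψ ε x y)
        = ∫ x in (-a)..(-b), (((x-a)⁻¹ - (x-b)⁻¹) + ∫ y in (-b)..b, auxf ψ ε x y) := by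
      apply integral_congr
      intro x hx
      rw [Set.uIcc_of_le (by linarith : -a ≤ -b)] at hx
      exact auxf_inner_left hψc hε0 hL hb0 hba hpm hpp x hx
    rw [hcg, integral_add hHmii (hiiGm _ _)]
    congr 1
    rw [integral_sub hii1 hii2]
    rw [aux_int_inv' a (-a) (-b) (fun x hx => by
      rw [Set.uIcc_of_le (by linarith : -a ≤ -b)] at hx
      exact ne_of_lt (by have := hx.2; linarith))]
    rw [aux_int_inv' b (-a) (-b) (fun x hx => by
      rw [Set.uIcc_of_le (by linarith : -a ≤ -b)] at hx
      exact ne_of_lt (by have := hx.2; linarith))]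
    have e1 : Real.log (-b - a) = Real.log (a+b) := by
      rw [show -b - a = -(a+b) by ring, Real.log_neg_eq_log]
    have e2 : Real.log (-a - a) = Real.log (2*a) := by
      rw [show -a - a = -(2*a) by ring, Real.log_neg_eq_log]
    have e3 : Real.log (-b - b) = Real.log (2*b) := by
      rw [show -b - b = -(2*b) by ring, Real.log_neg_eq_log]
    have e4 : Real.log (-a - b) = Real.log (a+b) := by
      rw [show -a - b = -(a+b) by ring, Real.log_neg_eq_log]
    rw [e1, e2, e3, e4]
    ring
  -- right piece
  have hii3 : IntervalIntegrable (fun x : ℝ => (x+b)⁻¹) volume b a := by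
    apply ContinuousOn.intervalIntegrable
    rw [Set.uIcc_of_le hba.le]
    exact ((continuous_add_right b).continuousOn).inv₀
      (fun x hx => by show x + b ≠ 0; have := hx.1; intro hc; nlinarith)
  have hii4 : IntervalIntegrable (fun x : ℝ => (x+a)⁻¹) volume b a := by
    apply ContinuousOn.intervalIntegrable
    rw [Set.uIcc_of_le hba.le]
    exact ((continuous_add_right a).continuousOn).inv₀
      (fun x hx => by show x + a ≠ 0; have := hx.1; intro hc; nlinarith)
  have hHpii : IntervalIntegrable (fun x : ℝ => (x+b)⁻¹ - (x+a)⁻¹) volume b a :=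
    hii3.sub hii4
  have t3 : (∫ x in b..a, ∫ y in (-a)..a, auxf ψ ε x y)
      = (2*Real.log (a+b) - Real.log (2*a) - Real.log (2*b))
        + ∫ x in b..a, ∫ y in (-b)..b, auxf ψ ε x y := by
    have hcg : (∫ x in b..a, ∫ y in (-a)..a, auxf ψ ε x y)
        = ∫ x in b..a, (((x+b)⁻¹ - (x+a)⁻¹) + ∫ y in (-b)..b, auxf ψ ε x y) := by
      apply integral_congr
      intro x hx
      rw [Set.uIcc_of_le hba.le] at hx
      exact auxf_inner_right hψc hε0 hL hb0 hba hpm hpp x hx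
    rw [hcg, integral_add hHpii (hiiGm _ _)]
    congr 1
    rw [integral_sub hii3 hii4]
    rw [aux_int_inv b b a (fun x hx => by
      rw [Set.uIcc_of_le hba.le] at hx
      exact ne_of_gt (by have := hx.1; linarith))]
    rw [aux_int_inv a b a (fun x hx => by
      rw [Set.uIcc_of_le hba.le] at hx
      exact ne_of_gt (by have := hx.1; linarith))]
    rw [show b + b = 2*b by ring, show a + a = 2*a by ring, show b + a = a + b by ring]
    ring
  -- nonnegativity of error terms
  have hGmid_nn : ∀ x : ℝ, 0 ≤ ∫ y in (-b)..b, auxf ψ ε x y :=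
    fun x => integral_nonneg (by linarith) (fun y _ => auxf_nonneg _ _ _ _)
  have hE1nn : 0 ≤ ∫ x in (-a)..(-b), ∫ y in (-b)..b, auxf ψ ε x y :=
    integral_nonneg (by linarith) (fun x _ => hGmid_nn x)
  have hE3nn : 0 ≤ ∫ x in b..a, ∫ y in (-b)..b, auxf ψ ε x y :=
    integral_nonneg hba.le (fun x _ => hGmid_nn x)
  have hE2nn : 0 ≤ ∫ x in (-b)..b, ∫ y in (-a)..a, auxf ψ ε x y :=
    integral_nonneg (by linarith)
      (fun x _ => integral_nonneg (by linarith) (fun y _ => auxf_nonneg _ _ _ _))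
  -- E2 bound
  have hGub : ∀ x ∈ Set.Icc (-a) a, (∫ y in (-a)..a, auxf ψ ε x y) ≤ 4*((L/ε)*(2*M)) := by
    intro x hx
    have step1 : (∫ y in (-a)..a, auxf ψ ε x y)
        ≤ ∫ y in (-a)..a, min ((L/ε)^2) (((2*M)/(x-y))^2) := by
      refine integral_mono_on (by linarith) (auxf_ii hψc hε0 hL x _ _) ?_
        (fun y _ => le_min (auxf_le_A hε0 hL x y) (auxf_le_B hM1 hM x y))
      exact aux_ii
        (measurable_const.min
          ((measurable_const.div (measurable_const.sub measurable_id)).pow_const 2))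
        (C := (L/ε)^2)
        (fun y => by
          rw [abs_of_nonneg (le_min (sq_nonneg _) (sq_nonneg _))]
          exact min_le_left _ _) _ _
    have step2 : (∫ y in (-a)..a, min ((L/ε)^2) (((2*M)/(x-y))^2))
        = ∫ t in (x-a)..(x+a), min ((L/ε)^2) (((2*M)/t)^2) := by
      have h := integral_comp_sub_left (a := -a) (b := a)
        (fun t : ℝ => min ((L/ε)^2) (((2*M)/t)^2)) x
      rw [show x - -a = x + a by ring] at h
      exact h
    have step3 : (∫ t in (x-a)..(x+a), min ((L/ε)^2) (((2*M)/t)^2))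
        ≤ ∫ t in (-(2*a))..(2*a), min ((L/ε)^2) (((2*M)/t)^2) := by
      refine integral_mono_interval (by have := hx.1; linarith) (by linarith)
        (by have := hx.2; linarith) ?_ (aux_ii (aux_min_meas _ _) (aux_min_abs _ _) _ _)
      exact Filter.Eventually.of_forall (fun t => le_min (sq_nonneg _) (sq_nonneg _))
    have step4 := aux_min_int_two hA0 hB0 (by linarith : (0:ℝ) ≤ 2*a)
    calc (∫ y in (-a)..a, auxf ψ ε x y)
        ≤ ∫ y in (-a)..a, min ((L/ε)^2) (((2*M)/(x-y))^2) := step1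
      _ = ∫ t in (x-a)..(x+a), min ((L/ε)^2) (((2*M)/t)^2) := step2
      _ ≤ ∫ t in (-(2*a))..(2*a), min ((L/ε)^2) (((2*M)/t)^2) := step3
      _ ≤ 4*((L/ε)*(2*M)) := step4
  have hE2ub : (∫ x in (-b)..b, ∫ y in (-a)..a, auxf ψ ε x y) ≤ 16*(R*(L*M)) := by
    have h := integral_mono_on (by linarith : -b ≤ b) (hiiG _ _)
      _root_.intervalIntegrable_const
      (fun x hx => hGub x ⟨by have := hx.1; linarith, by have := hx.2; linarith⟩)
    rw [intervalIntegral.integral_const, smul_eq_mul] at h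
    refine h.trans (le_of_eq ?_)
    rw [show b - -b = 2*b by ring, hbdef]
    have hεne : ε ≠ 0 := ne_of_gt hε0
    field_simp
    ring
  -- E1 bound
  have hminii1 : IntervalIntegrable
      (fun x : ℝ => (2*b) * min ((L/ε)^2) (((2*M)/(-b-x))^2)) volume (-a) (-b) := by
    exact aux_ii (measurable_const.mul (measurable_const.min
        ((measurable_const.div (measurable_const.sub measurable_id)).pow_const 2)))
      (C := (2*b) * (L/ε)^2)
      (fun x => by
        show |(2*b) * min ((L/ε)^2) (((2*M)/(-b-x))^2)| ≤ _
        rw [abs_mul, abs_of_nonneg (by linarith : (0:ℝ) ≤ 2*b),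
          abs_of_nonneg (le_min (sq_nonneg _) (sq_nonneg _))]
        exact mul_le_mul_of_nonneg_left (min_le_left _ _) (by linarith)) _ _
  have hE1ub : (∫ x in (-a)..(-b), ∫ y in (-b)..b, auxf ψ ε x y) ≤ 8*(R*(L*M)) := by
    have hmono : (∫ x in (-a)..(-b), ∫ y in (-b)..b, auxf ψ ε x y)
        ≤ ∫ x in (-a)..(-b), (2*b) * min ((L/ε)^2) (((2*M)/(-b-x))^2) := by
      refine integral_mono_ae_restrict (by linarith) (hiiGm _ _) hminii1 ?_
      have h1 : ∀ᵐ x : ℝ ∂volume, x ≠ -b := by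
        have hs : {x : ℝ | ¬ x ≠ -b} = {-b} := by ext z; simp
        rw [MeasureTheory.ae_iff, hs]
        exact Real.volume_singleton
      filter_upwards [MeasureTheory.ae_restrict_of_ae h1,
        MeasureTheory.ae_restrict_mem measurableSet_Icc] with x hne hmem
      have hxlt : x < -b := lt_of_le_of_ne hmem.2 hne
      calc (∫ y in (-b)..b, auxf ψ ε x y)
          ≤ ∫ _ in (-b)..b, min ((L/ε)^2) (((2*M)/(-b-x))^2) := by
            refine integral_mono_on (by linarith) (auxf_ii hψc hε0 hL x _ _)
              _root_.intervalIntegrable_const ?_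
            intro y hy
            refine le_min (auxf_le_A hε0 hL x y) ((auxf_le_B hM1 hM x y).trans ?_)
            have h2 : 0 < -b - x := by linarith
            have h3 : -b - x ≤ y - x := by have := hy.1; linarith
            rw [show ((2*M)/(x-y))^2 = (2*M)^2/((y-x)^2) by
              rw [div_pow, show (x-y)^2 = (y-x)^2 by ring], div_pow]
            exact div_le_div_of_nonneg_left (sq_nonneg _) (by positivity) (by nlinarith)
        _ = (2*b) * min ((L/ε)^2) (((2*M)/(-b-x))^2) := by
            rw [intervalIntegral.integral_const, smul_eq_mul, show b - -b = 2*b by ring]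
    refine hmono.trans ?_
    rw [intervalIntegral.integral_const_mul]
    have hcomp : (∫ x in (-a)..(-b), min ((L/ε)^2) (((2*M)/(-b-x))^2))
        = ∫ t in (0:ℝ)..(a-b), min ((L/ε)^2) (((2*M)/t)^2) := by
      have h := integral_comp_sub_left (a := -a) (b := -b)
        (fun t : ℝ => min ((L/ε)^2) (((2*M)/t)^2)) (-b)
      rw [show -b - -b = (0:ℝ) by ring, show -b - -a = a - b by ring] at h
      exact h
    rw [hcomp]
    have hmi := aux_min_int hA0 hB0 (by linarith : (0:ℝ) ≤ a - b)
    calc (2*b) * ∫ t in (0:ℝ)..(a-b), min ((L/ε)^2) (((2*M)/t)^2)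
        ≤ (2*b) * (2*((L/ε)*(2*M))) := mul_le_mul_of_nonneg_left hmi (by linarith)
      _ = 8*(R*(L*M)) := by
          rw [hbdef]
          have hεne : ε ≠ 0 := ne_of_gt hε0
          field_simp
          ring
  -- E3 bound
  have hminii3 : IntervalIntegrable
      (fun x : ℝ => (2*b) * min ((L/ε)^2) (((2*M)/(x-b))^2)) volume b a := by
    exact aux_ii (measurable_const.mul (measurable_const.min
        ((measurable_const.div (measurable_id.sub measurable_const)).pow_const 2)))
      (C := (2*b) * (L/ε)^2)
      (fun x => by
        show |(2*b) * min ((L/ε)^2) (((2*M)/(x-b))^2)| ≤ _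
        rw [abs_mul, abs_of_nonneg (by linarith : (0:ℝ) ≤ 2*b),
          abs_of_nonneg (le_min (sq_nonneg _) (sq_nonneg _))]
        exact mul_le_mul_of_nonneg_left (min_le_left _ _) (by linarith)) _ _
  have hE3ub : (∫ x in b..a, ∫ y in (-b)..b, auxf ψ ε x y) ≤ 8*(R*(L*M)) := by
    have hmono : (∫ x in b..a, ∫ y in (-b)..b, auxf ψ ε x y)
        ≤ ∫ x in b..a, (2*b) * min ((L/ε)^2) (((2*M)/(x-b))^2) := by
      refine integral_mono_ae_restrict hba.le (hiiGm _ _) hminii3 ?_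
      have h1 : ∀ᵐ x : ℝ ∂volume, x ≠ b := by
        have hs : {x : ℝ | ¬ x ≠ b} = {b} := by ext z; simp
        rw [MeasureTheory.ae_iff, hs]
        exact Real.volume_singleton
      filter_upwards [MeasureTheory.ae_restrict_of_ae h1,
        MeasureTheory.ae_restrict_mem measurableSet_Icc] with x hne hmem
      have hxgt : b < x := lt_of_le_of_ne hmem.1 (Ne.symm hne)
      calc (∫ y in (-b)..b, auxf ψ ε x y)
          ≤ ∫ _ in (-b)..b, min ((L/ε)^2) (((2*M)/(x-b))^2) := by
            refine integral_mono_on (by linarith) (auxf_ii hψc hε0 hL x _ _)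
              _root_.intervalIntegrable_const ?_
            intro y hy
            refine le_min (auxf_le_A hε0 hL x y) ((auxf_le_B hM1 hM x y).trans ?_)
            have h2 : 0 < x - b := by linarith
            have h3 : x - b ≤ x - y := by have := hy.2; linarith
            rw [div_pow, div_pow]
            exact div_le_div_of_nonneg_left (sq_nonneg _) (by positivity) (by nlinarith)
        _ = (2*b) * min ((L/ε)^2) (((2*M)/(x-b))^2) := by
            rw [intervalIntegral.integral_const, smul_eq_mul, show b - -b = 2*b by ring]
    refine hmono.trans ?_
    rw [intervalIntegral.integral_const_mul]
    have hcomp : (∫ x in b..a, min ((L/ε)^2) (((2*M)/(x-b))^2))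
        = ∫ t in (0:ℝ)..(a-b), min ((L/ε)^2) (((2*M)/t)^2) := by
      have h := integral_comp_sub_right (a := b) (b := a)
        (fun t : ℝ => min ((L/ε)^2) (((2*M)/t)^2)) b
      rw [show b - b = (0:ℝ) by ring] at h
      exact h
    rw [hcomp]
    have hmi := aux_min_int hA0 hB0 (by linarith : (0:ℝ) ≤ a - b)
    calc (2*b) * ∫ t in (0:ℝ)..(a-b), min ((L/ε)^2) (((2*M)/t)^2)
        ≤ (2*b) * (2*((L/ε)*(2*M))) := mul_le_mul_of_nonneg_left hmi (by linarith)
      _ = 8*(R*(L*M)) := by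
          rw [hbdef]
          have hεne : ε ≠ 0 := ne_of_gt hε0
          field_simp
          ring
  -- log identities
  have hlog2b : Real.log (2*b) = Real.log 2 + Real.log R + Real.log ε := by
    rw [hbdef, show (2:ℝ)*(R*ε) = 2*R*ε by ring,
      Real.log_mul (by positivity : (2:ℝ)*R ≠ 0) (ne_of_gt hε0),
      Real.log_mul (by norm_num : (2:ℝ) ≠ 0) (ne_of_gt hR)]
  have hlog1e : Real.log (1/ε) = -Real.log ε := by rw [one_div, Real.log_inv]
  have hab1 : Real.log a ≤ Real.log (a+b) := Real.log_le_log ha (by linarith)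
  have hab2 : Real.log (a+b) ≤ Real.log (2*a) := Real.log_le_log (by linarith) (by linarith)
  have habs : |Real.log (a+b)| ≤ |Real.log a| + |Real.log (2*a)| :=
    abs_le.2 ⟨by linarith [neg_abs_le (Real.log a), abs_nonneg (Real.log (2*a))],
      by linarith [le_abs_self (Real.log (2*a)), abs_nonneg (Real.log a)]⟩
  -- final assembly
  have hkey : (∫ x in (-a)..a, ∫ y in (-a)..a, auxf ψ ε x y) - 2 * Real.log (1/ε)
      = (4*Real.log (a+b) - 2*Real.log (2*a) - 2*Real.log 2 - 2*Real.log R)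
        + ((∫ x in (-a)..(-b), ∫ y in (-b)..b, auxf ψ ε x y)
          + (∫ x in (-b)..b, ∫ y in (-a)..a, auxf ψ ε x y)
          + (∫ x in b..a, ∫ y in (-b)..b, auxf ψ ε x y)) := by
    rw [← s2, ← s1, t1, t3, hlog2b, hlog1e]
    ring
  rw [hkey]
  have hV : |4*Real.log (a+b) - 2*Real.log (2*a) - 2*Real.log 2 - 2*Real.log R| ≤ Ca := by
    rw [hCadef]
    apply abs_le.2
    constructor
    · have p1 := abs_le.1 habs
      have p2 := le_abs_self (Real.log (2*a))
      have p3 := neg_abs_le (Real.log (2*a))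
      have p4 := le_abs_self (Real.log 2)
      have p5 := neg_abs_le (Real.log 2)
      have p6 := le_abs_self (Real.log R)
      have p7 := neg_abs_le (Real.log R)
      linarith [p1.1, p1.2]
    · have p1 := abs_le.1 habs
      have p2 := le_abs_self (Real.log (2*a))
      have p3 := neg_abs_le (Real.log (2*a))
      have p4 := le_abs_self (Real.log 2)
      have p5 := neg_abs_le (Real.log 2)
      have p6 := le_abs_self (Real.log R)
      have p7 := neg_abs_le (Real.log R)
      linarith [p1.1, p1.2]
  refine (abs_add_le _ _).trans ?_
  have hEabs : |(∫ x in (-a)..(-b), ∫ y in (-b)..b, auxf ψ ε x y)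
      + (∫ x in (-b)..b, ∫ y in (-a)..a, auxf ψ ε x y)
      + (∫ x in b..a, ∫ y in (-b)..b, auxf ψ ε x y)| ≤ 32*(R*(L*M)) := by
    rw [abs_of_nonneg (by linarith)]
    linarith
  linarith
end

section
/- Let R > 0, let ψ : ℝ → ℝ be a smooth (C^∞) function with ψ(x) = 1/2 for x ≤ −R and ψ(x) = −1/2 for x ≥ R, let ζ(λ) = −(2/π) arctan(λ), and let χ₀ : ℝ → ℝ be a smooth compactly supported function with χ₀ = 1 on a neighbourhood of 0. For ε > 0 define ω_ε(x) = 2 ψ(x/ε) χ₀(x) − ( ζ(x/ε) − ζ(x) ). Then there exists ε₀ ∈ (0,1) such that sup over ε ∈ (0, ε₀) of ∫_{ℝ}∫_{ℝ} | ( ω_ε(x) − ω_ε(y) ) / ( x − y ) |² dx dy is finite. -/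
open MeasureTheory
open Real

lemma aux_int {ε : ℝ} (hε : 0 < ε) :
    Integrable (fun x : ℝ => ε / (ε ^ 2 + x ^ 2)) ∧
      (∫ x : ℝ, ε / (ε ^ 2 + x ^ 2)) = π := by
  have hne : ε ≠ 0 := hε.ne'
  have heq : (fun x : ℝ => ε / (ε ^ 2 + x ^ 2)) = fun x : ℝ => ε⁻¹ * (1 + (x / ε) ^ 2)⁻¹ := by
    funext x
    have h2 : 0 < ε ^ 2 + x ^ 2 := by positivity
    field_simp
  constructor
  · rw [heq]
    exact (integrable_inv_one_add_sq.comp_div hne).const_mul _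
  · rw [heq, MeasureTheory.integral_const_mul,
      MeasureTheory.Measure.integral_comp_div (g := fun y : ℝ => (1 + y ^ 2)⁻¹) ε,
      integral_univ_inv_one_add_sq, smul_eq_mul, abs_of_pos hε]
    field_simp

lemma aux_L1 (p : ℝ → ℝ) (hp : ∀ x, 0 ≤ p x) (hpi : Integrable p)
    (F : ℝ → ℝ) (hF : ∀ x y, ((F x - F y) / (x - y)) ^ 2 ≤ p x * p y) :
    (∫⁻ x : ℝ, ∫⁻ y : ℝ, ENNReal.ofReal (((F x - F y) / (x - y)) ^ 2))
      ≤ ENNReal.ofReal ((∫ x, p x) ^ 2) := by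
  have hInn : ∀ x : ℝ, (∫⁻ y : ℝ, ENNReal.ofReal (p x * p y))
      = ENNReal.ofReal (p x) * ENNReal.ofReal (∫ y, p y) := by
    intro x
    have : ∀ y : ℝ, ENNReal.ofReal (p x * p y)
        = ENNReal.ofReal (p x) * ENNReal.ofReal (p y) := fun y =>
      ENNReal.ofReal_mul (hp x)
    simp_rw [this]
    rw [lintegral_const_mul' _ _ ENNReal.ofReal_ne_top,
      ← ofReal_integral_eq_lintegral_ofReal hpi (Filter.Eventually.of_forall hp)]
  calc (∫⁻ x : ℝ, ∫⁻ y : ℝ, ENNReal.ofReal (((F x - F y) / (x - y)) ^ 2))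
      ≤ ∫⁻ x : ℝ, ∫⁻ y : ℝ, ENNReal.ofReal (p x * p y) :=
        lintegral_mono fun x => lintegral_mono fun y =>
          ENNReal.ofReal_le_ofReal (hF x y)
    _ = ∫⁻ x : ℝ, ENNReal.ofReal (p x) * ENNReal.ofReal (∫ y, p y) := by
        simp_rw [hInn]
    _ = (∫⁻ x : ℝ, ENNReal.ofReal (p x)) * ENNReal.ofReal (∫ y, p y) := by
        rw [lintegral_mul_const' _ _ ENNReal.ofReal_ne_top]
    _ = ENNReal.ofReal (∫ x, p x) * ENNReal.ofReal (∫ y, p y) := by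
        rw [← ofReal_integral_eq_lintegral_ofReal hpi (Filter.Eventually.of_forall hp)]
    _ = ENNReal.ofReal ((∫ x, p x) ^ 2) := by
        rw [← ENNReal.ofReal_mul (integral_nonneg hp), sq]

lemma aux_H2 (f f' : ℝ → ℝ) (L : ℝ)
    (hd : ∀ t, HasDerivAt f (f' t) t)
    (hb : ∀ t, |f' t| ≤ L / (1 + t ^ 2)) :
    ∀ a b : ℝ, 0 ≤ a * b → |f a - f b| ≤ L * |a - b| / (1 + min |a| |b| ^ 2) := by
  have hL : 0 ≤ L := by
    have := (abs_nonneg (f' 0)).trans (hb 0)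
    simpa using this
  intro a b hab
  set m := min |a| |b| with hm
  have hm0 : 0 ≤ m := le_min (abs_nonneg a) (abs_nonneg b)
  have hmden : (0:ℝ) < 1 + m ^ 2 := by positivity
  have key : ∀ t ∈ Set.uIcc a b, ‖f' t‖ ≤ L / (1 + m ^ 2) := by
    intro t ht
    have hma : m ≤ |a| := min_le_left _ _
    have hmb : m ≤ |b| := min_le_right _ _
    have htm : m ≤ |t| := by
      rcases Set.mem_uIcc.mp ht with ⟨h1, h2⟩ | ⟨h1, h2⟩ <;>
        rcases mul_nonneg_iff.mp hab with ⟨ha, hb'⟩ | ⟨ha, hb'⟩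
      · rw [abs_of_nonneg ha] at hma
        rw [abs_of_nonneg (le_trans ha h1)]; linarith
      · rw [abs_of_nonpos hb'] at hmb
        rw [abs_of_nonpos (le_trans h2 hb')]; linarith
      · rw [abs_of_nonneg hb'] at hmb
        rw [abs_of_nonneg (le_trans hb' h1)]; linarith
      · rw [abs_of_nonpos ha] at hma
        rw [abs_of_nonpos (le_trans h2 ha)]; linarith
    have hsq : 1 + m ^ 2 ≤ 1 + t ^ 2 := by
      have : m ^ 2 ≤ t ^ 2 := by
        rw [← sq_abs t]
        exact pow_le_pow_left₀ hm0 htm 2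
      linarith
    rw [Real.norm_eq_abs]
    exact (hb t).trans (div_le_div_of_nonneg_left hL hmden hsq)
  have hmain := (convex_uIcc a b).norm_image_sub_le_of_norm_hasDerivWithin_le
    (fun t _ => (hd t).hasDerivWithinAt) key (Set.right_mem_uIcc) (Set.left_mem_uIcc)
  rw [Real.norm_eq_abs, Real.norm_eq_abs] at hmain
  calc |f a - f b| ≤ L / (1 + m ^ 2) * |a - b| := hmain
    _ = L * |a - b| / (1 + m ^ 2) := by ring

lemma aux_L2 (f : ℝ → ℝ) (K L : ℝ) (hK : 0 ≤ K) (hL : 0 ≤ L)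
    (h1 : ∀ t, |f t| ≤ K / (1 + |t|))
    (h2 : ∀ a b : ℝ, 0 ≤ a * b → |f a - f b| ≤ L * |a - b| / (1 + min |a| |b| ^ 2)) :
    ∀ x y : ℝ, |f x - f y| ≤ 9 * (K + L) * |x - y| / ((1 + |x|) * (1 + |y|)) := by
  intro x y
  set m := min |x| |y| with hm
  set M := max |x| |y| with hM
  have hm0 : 0 ≤ m := le_min (abs_nonneg x) (abs_nonneg y)
  have hmM : m ≤ M := min_le_max
  have hprod : (1 + |x|) * (1 + |y|) = (1 + m) * (1 + M) := by
    rcases le_total |x| |y| with h | h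
    · rw [hm, hM, min_eq_left h, max_eq_right h]
    · rw [hm, hM, min_eq_right h, max_eq_left h]; ring
  have hden : (0:ℝ) < (1 + m) * (1 + M) := by positivity
  have habs : M - m ≤ |x - y| := by
    have h1' : |x| - |y| ≤ |x - y| := abs_sub_abs_le_abs_sub x y
    have h2' : |y| - |x| ≤ |x - y| := by
      rw [abs_sub_comm x y] at h1' ⊢
      exact abs_sub_abs_le_abs_sub y x
    rcases le_total |x| |y| with h | h
    · rw [hm, hM, min_eq_left h, max_eq_right h]; linarith
    · rw [hm, hM, min_eq_right h, max_eq_left h]; linarith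
  have habs0 : 0 ≤ |x - y| := abs_nonneg _
  rw [hprod]
  rcases le_or_gt 0 (x * y) with hxy | hxy
  · -- same sign
    have hbase := h2 x y hxy
    rcases le_or_gt M (2 * m + 1) with hc | hc
    · -- close case
      refine hbase.trans ?_
      rw [div_le_div_iff₀ (by positivity) hden]
      have hA : (1 + m) * (1 + M) ≤ 4 * (1 + m ^ 2) := by nlinarith [sq_nonneg (m - 1)]
      nlinarith [mul_nonneg hL habs0, mul_nonneg (mul_nonneg hL habs0) hm0,
        mul_nonneg hK habs0, sq_nonneg m]
    · -- far case
      have hfb : |f x - f y| ≤ K / (1 + m) + K / (1 + M) := by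
        have := (abs_sub (f x) (f y)).trans (add_le_add (h1 x) (h1 y))
        rcases le_total |x| |y| with h | h
        · rw [hm, hM, min_eq_left h, max_eq_right h]; exact this
        · rw [hm, hM, min_eq_right h, max_eq_left h]; linarith
      refine hfb.trans ?_
      have heq : K / (1 + m) + K / (1 + M) = K * (2 + m + M) / ((1 + m) * (1 + M)) := by
        rw [div_add_div _ _ (ne_of_gt (by linarith)) (ne_of_gt (by linarith))]; ring
      rw [heq, div_le_div_iff₀ hden hden]
      have hxy2 : M - m ≤ |x - y| := habs
      nlinarith [mul_pos hden hden, mul_nonneg hK hm0, mul_nonneg hL hm0,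
        mul_nonneg (mul_nonneg hK hm0) (le_of_lt hden),
        mul_nonneg hK (le_of_lt hden), mul_nonneg hL (le_of_lt hden),
        mul_nonneg (mul_nonneg hL habs0) (le_of_lt hden)]
  · -- opposite signs
    have hsum : |x - y| = |x| + |y| := by
      rcases mul_neg_iff.mp hxy with ⟨hx, hy⟩ | ⟨hx, hy⟩
      · rw [abs_of_pos hx, abs_of_neg hy, abs_of_pos (by linarith : (0:ℝ) < x - y)]; ring
      · rw [abs_of_neg hx, abs_of_pos hy, abs_of_neg (by linarith : x - y < (0:ℝ))]; ring
    have hsummM : |x| + |y| = m + M := by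
      rcases le_total |x| |y| with h | h
      · rw [hm, hM, min_eq_left h, max_eq_right h]
      · rw [hm, hM, min_eq_right h, max_eq_left h]; ring
    rcases le_or_gt (m + M) 2 with hc | hc
    · -- both small : go through 0
      have hx0 : |f x - f 0| ≤ L * |x| := by
        have := h2 x 0 (by simp)
        simpa using this
      have hy0 : |f y - f 0| ≤ L * |y| := by
        have := h2 y 0 (by simp)
        simpa using this
      have htri : |f x - f y| ≤ L * (|x| + |y|) := by
        have := (abs_sub_le (f x) (f 0) (f y))
        have h' : |f 0 - f y| = |f y - f 0| := abs_sub_comm _ _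
        calc |f x - f y| ≤ |f x - f 0| + |f 0 - f y| := abs_sub_le _ _ _
          _ = |f x - f 0| + |f y - f 0| := by rw [h']
          _ ≤ L * |x| + L * |y| := add_le_add hx0 hy0
          _ = L * (|x| + |y|) := by ring
      refine htri.trans ?_
      rw [hsum, hsummM, le_div_iff₀ hden]
      have h9 : (1 + m) * (1 + M) ≤ 9 := by nlinarith
      have ht : 0 ≤ L * (m + M) := mul_nonneg hL (add_nonneg hm0 (hm0.trans hmM))
      nlinarith [mul_le_mul_of_nonneg_left h9 ht,
        mul_nonneg hK (add_nonneg hm0 (hm0.trans hmM))]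
    · -- both large
      have hfb : |f x - f y| ≤ K / (1 + m) + K / (1 + M) := by
        have := (abs_sub (f x) (f y)).trans (add_le_add (h1 x) (h1 y))
        rcases le_total |x| |y| with h | h
        · rw [hm, hM, min_eq_left h, max_eq_right h]; exact this
        · rw [hm, hM, min_eq_right h, max_eq_left h]; linarith
      refine hfb.trans ?_
      have heq : K / (1 + m) + K / (1 + M) = K * (2 + m + M) / ((1 + m) * (1 + M)) := by
        rw [div_add_div _ _ (ne_of_gt (by linarith)) (ne_of_gt (by linarith))]; ring
      rw [heq, hsum, hsummM, div_le_div_iff₀ hden hden]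
      nlinarith [mul_pos hden hden, mul_nonneg hK (le_of_lt hden),
        mul_nonneg hL (le_of_lt hden), mul_nonneg (mul_nonneg hK (le_of_lt hden)) (by linarith : (0:ℝ) ≤ m + M - 2)]

lemma aux_arctan_le {x : ℝ} (hx : 0 ≤ x) : arctan x ≤ x := by
  have hmvt := (convex_Icc (0:ℝ) x).norm_image_sub_le_of_norm_hasDerivWithin_le
    (f := arctan) (f' := fun t => 1 / (1 + t ^ 2))
    (fun t _ => (Real.hasDerivAt_arctan t).hasDerivWithinAt)
    (fun t _ => by
      rw [Real.norm_eq_abs, abs_of_pos (by positivity)]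
      rw [div_le_one (by positivity)]
      nlinarith [sq_nonneg t])
    (Set.left_mem_Icc.mpr hx) (Set.right_mem_Icc.mpr hx)
  rw [Real.norm_eq_abs, Real.norm_eq_abs, arctan_zero, sub_zero, sub_zero, one_mul] at hmvt
  calc arctan x ≤ |arctan x| := le_abs_self _
    _ ≤ |x| := hmvt
    _ = x := abs_of_nonneg hx

lemma aux_arctan_tail {t : ℝ} (ht : 1 ≤ t) : |2 / π * arctan t - 1| ≤ 2 / (1 + t) := by
  have ht0 : 0 < t := lt_of_lt_of_le one_pos ht
  have hπ : 0 < π := pi_pos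
  have hinv : arctan t⁻¹ = π / 2 - arctan t := arctan_inv_of_pos ht0
  have h1 : 2 / π * arctan t - 1 ≤ 0 := by
    have h := (arctan_lt_pi_div_two t).le
    rw [sub_nonpos]
    calc 2 / π * arctan t ≤ 2 / π * (π / 2) :=
          mul_le_mul_of_nonneg_left h (by positivity)
      _ = 1 := by field_simp
  rw [abs_of_nonpos h1, neg_sub]
  have h2 : 1 - 2 / π * arctan t = 2 / π * arctan t⁻¹ := by
    rw [hinv]; field_simp
  rw [h2]
  have h3 : arctan t⁻¹ ≤ t⁻¹ := aux_arctan_le (by positivity)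
  have h4 : t⁻¹ ≤ 2 / (1 + t) := by
    rw [inv_eq_one_div, div_le_div_iff₀ (by positivity) (by positivity)]
    linarith
  have h5 : 2 / π ≤ 1 := by
    rw [div_le_one hπ]; linarith [pi_gt_three]
  have h6 : 0 ≤ arctan t⁻¹ := by
    rw [← arctan_zero]
    exact arctan_strictMono.monotone (by positivity)
  calc 2 / π * arctan t⁻¹ ≤ 1 * arctan t⁻¹ := by nlinarith
    _ = arctan t⁻¹ := one_mul _
    _ ≤ t⁻¹ := h3
    _ ≤ 2 / (1 + t) := h4

lemma aux_sq (F : ℝ → ℝ) (C : ℝ)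
    (h : ∀ u v : ℝ, |F u - F v| ≤ C * |u - v| / ((1 + |u|) * (1 + |v|)))
    {ε : ℝ} (hε : 0 < ε) (x y : ℝ) :
    (F (x / ε) - F (y / ε)) ^ 2
      ≤ C ^ 2 * (x - y) ^ 2 * (ε / (ε ^ 2 + x ^ 2) * (ε / (ε ^ 2 + y ^ 2))) := by
  have hden : ∀ z : ℝ, ε ^ 2 + z ^ 2 ≤ ε ^ 2 * (1 + |z / ε|) ^ 2 := by
    intro z
    have h1 : |z / ε| = |z| / ε := by rw [abs_div, abs_of_pos hε]
    have h2 : (0:ℝ) ≤ |z| := abs_nonneg z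
    have h3 : ε ^ 2 * (1 + |z| / ε) ^ 2 = ε ^ 2 + 2 * ε * |z| + z ^ 2 := by
      field_simp; linarith [sq_abs z]
    rw [h1, h3]
    nlinarith [mul_nonneg hε.le h2]
  have habs := h (x / ε) (y / ε)
  have hsq : (F (x / ε) - F (y / ε)) ^ 2
      ≤ C ^ 2 * (x / ε - y / ε) ^ 2 / ((1 + |x / ε|) ^ 2 * (1 + |y / ε|) ^ 2) := by
    calc (F (x / ε) - F (y / ε)) ^ 2 = |F (x / ε) - F (y / ε)| ^ 2 := (sq_abs _).symm
      _ ≤ (C * |x / ε - y / ε| / ((1 + |x / ε|) * (1 + |y / ε|))) ^ 2 :=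
          pow_le_pow_left₀ (abs_nonneg _) habs 2
      _ = C ^ 2 * (x / ε - y / ε) ^ 2 / ((1 + |x / ε|) ^ 2 * (1 + |y / ε|) ^ 2) := by
          rw [div_pow, mul_pow, mul_pow, sq_abs]
  refine hsq.trans ?_
  have hxy : (x / ε - y / ε) ^ 2 = (x - y) ^ 2 / ε ^ 2 := by
    field_simp; try ring
  have hq : ε / (ε ^ 2 + x ^ 2) * (ε / (ε ^ 2 + y ^ 2))
      = ε ^ 2 / ((ε ^ 2 + x ^ 2) * (ε ^ 2 + y ^ 2)) := by
    rw [div_mul_div_comm, sq]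
  rw [hxy, hq]
  have hD1 : (0:ℝ) < (1 + |x / ε|) ^ 2 := by positivity
  have hD2 : (0:ℝ) < (1 + |y / ε|) ^ 2 := by positivity
  have hP1 : (0:ℝ) < ε ^ 2 + x ^ 2 := by positivity
  have hP2 : (0:ℝ) < ε ^ 2 + y ^ 2 := by positivity
  have e1 : C ^ 2 * ((x - y) ^ 2 / ε ^ 2) / ((1 + |x / ε|) ^ 2 * (1 + |y / ε|) ^ 2)
      = C ^ 2 * (x - y) ^ 2 / (ε ^ 2 * ((1 + |x / ε|) ^ 2 * (1 + |y / ε|) ^ 2)) := by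
    rw [← mul_div_assoc, div_div]
  have e2 : C ^ 2 * (x - y) ^ 2 * (ε ^ 2 / ((ε ^ 2 + x ^ 2) * (ε ^ 2 + y ^ 2)))
      = C ^ 2 * (x - y) ^ 2 * ε ^ 2 / ((ε ^ 2 + x ^ 2) * (ε ^ 2 + y ^ 2)) :=
    (mul_div_assoc _ _ _).symm
  rw [e1, e2, div_le_div_iff₀ (by positivity) (by positivity)]
  have hP : (ε ^ 2 + x ^ 2) * (ε ^ 2 + y ^ 2)
      ≤ ε ^ 2 * (1 + |x / ε|) ^ 2 * (ε ^ 2 * (1 + |y / ε|) ^ 2) :=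
    mul_le_mul (hden x) (hden y) hP2.le (by positivity)
  have hC2 : (0:ℝ) ≤ C ^ 2 * (x - y) ^ 2 := by positivity
  nlinarith [mul_le_mul_of_nonneg_left hP hC2]
lemma aux_comb (a b u1 v1 u2 v2 X : ℝ) (ha : 0 ≤ a) (hb : 0 ≤ b)
    (hu1 : 0 ≤ u1) (hv1 : 0 ≤ v1) (hu2 : 0 ≤ u2) (hv2 : 0 ≤ v2) (hX : 0 ≤ X) :
    2 * (a ^ 2 * X * (u1 * u2)) + 2 * (b ^ 2 * X * (v1 * v2))
      ≤ 2 * (a + b) * (u1 + v1) * (2 * (a + b) * (u2 + v2)) * X := by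
  have e1 : u1 * u2 + v1 * v2 ≤ (u1 + v1) * (u2 + v2) := by
    nlinarith [mul_nonneg hu1 hv2, mul_nonneg hv1 hu2]
  have e2 : 2 * a ^ 2 ≤ 4 * (a + b) ^ 2 := by nlinarith [mul_nonneg ha hb, sq_nonneg a, sq_nonneg b]
  have e3 : 2 * b ^ 2 ≤ 4 * (a + b) ^ 2 := by nlinarith [mul_nonneg ha hb, sq_nonneg a, sq_nonneg b]
  have h4 : 0 ≤ (a + b) ^ 2 := sq_nonneg _
  have h5 : 0 ≤ u1 * u2 := mul_nonneg hu1 hu2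
  have h6 : 0 ≤ v1 * v2 := mul_nonneg hv1 hv2
  have step1 : 2 * (a ^ 2 * X * (u1 * u2)) ≤ 4 * (a + b) ^ 2 * X * (u1 * u2) := by
    have := mul_le_mul_of_nonneg_right e2 (mul_nonneg hX h5)
    nlinarith [this]
  have step2 : 2 * (b ^ 2 * X * (v1 * v2)) ≤ 4 * (a + b) ^ 2 * X * (v1 * v2) := by
    have := mul_le_mul_of_nonneg_right e3 (mul_nonneg hX h6)
    nlinarith [this]
  have step3 : 4 * (a + b) ^ 2 * X * (u1 * u2) + 4 * (a + b) ^ 2 * X * (v1 * v2)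
      ≤ 4 * (a + b) ^ 2 * X * ((u1 + v1) * (u2 + v2)) := by
    have h7 : 0 ≤ 4 * (a + b) ^ 2 * X := by positivity
    nlinarith [mul_le_mul_of_nonneg_left e1 h7]
  have : 2 * (a + b) * (u1 + v1) * (2 * (a + b) * (u2 + v2)) * X
      = 4 * (a + b) ^ 2 * X * ((u1 + v1) * (u2 + v2)) := by ring
  linarith

lemma aux_two_sq (a b : ℝ) : (a + b) ^ 2 ≤ 2 * a ^ 2 + 2 * b ^ 2 := by
  nlinarith [sq_nonneg (a - b)]

set_option maxHeartbeats 1000000 in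
/-- With `ψ` smooth equal to `±1/2` near `∓∞`, `ζ(λ) = -(2/π) arctan λ`, and `χ₀`
smooth, compactly supported and equal to `1` near `0`, the squared Hilbert–Schmidt
integrals `∫∫ |(ω_ε(x) - ω_ε(y))/(x-y)|² dx dy` for
`ω_ε(x) = 2ψ(x/ε)χ₀(x) - (ζ(x/ε) - ζ(x))` are bounded uniformly for small `ε`. -/
theorem stmt15 (R : ℝ) (hR : 0 < R) (ψ : ℝ → ℝ) (hψ : ContDiff ℝ (⊤ : ℕ∞) ψ)
    (hψm : ∀ x : ℝ, x ≤ -R → ψ x = 1 / 2)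
    (hψp : ∀ x : ℝ, R ≤ x → ψ x = -(1 / 2))
    (ζ : ℝ → ℝ) (hζ : ζ = fun l : ℝ => -(2 / Real.pi) * Real.arctan l)
    (χ₀ : ℝ → ℝ) (hχ : ContDiff ℝ (⊤ : ℕ∞) χ₀) (hχs : HasCompactSupport χ₀)
    (hχ1 : ∃ δ > 0, ∀ x : ℝ, |x| < δ → χ₀ x = 1)
    (ω : ℝ → ℝ → ℝ)
    (hω : ∀ ε x : ℝ, ω ε x = 2 * ψ (x / ε) * χ₀ x - (ζ (x / ε) - ζ x)) :
    ∃ ε₀ ∈ Set.Ioo (0 : ℝ) 1, ∃ C : ℝ, ∀ ε ∈ Set.Ioo (0 : ℝ) ε₀,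
      (∫⁻ x : ℝ, ∫⁻ y : ℝ, ENNReal.ofReal (((ω ε x - ω ε y) / (x - y)) ^ 2))
        ≤ ENNReal.ofReal C := by
  obtain ⟨δ, hδ, hδ1⟩ := hχ1
  have hπ : (0:ℝ) < π := Real.pi_pos
  have h2π : 2 / π ≤ 1 := by
    rw [div_le_one hπ]; linarith [pi_gt_three]
  -- ψ bounded
  obtain ⟨M₁, hM₁⟩ := (isCompact_Icc (a := -R) (b := R)).exists_bound_of_continuousOn
    hψ.continuous.continuousOn
  set Mψ : ℝ := max M₁ (1/2) with hMψdef
  have hMψ : ∀ t : ℝ, |ψ t| ≤ Mψ := by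
    intro t
    rcases le_total t (-R) with h | h
    · rw [hψm t h]
      calc |(1:ℝ)/2| = 1/2 := by norm_num
        _ ≤ Mψ := le_max_right _ _
    rcases le_total R t with h' | h'
    · rw [hψp t h']
      calc |(-(1/2) : ℝ)| = 1/2 := by norm_num
        _ ≤ Mψ := le_max_right _ _
    · exact (hM₁ t ⟨h, h'⟩).trans (le_max_left _ _)
  have hMψ0 : 0 ≤ Mψ := (abs_nonneg (ψ 0)).trans (hMψ 0)
  clear_value Mψ
  -- deriv ψ
  have hψdiff : Differentiable ℝ ψ := hψ.differentiable (by simp)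
  have hψd : ∀ t : ℝ, HasDerivAt ψ (deriv ψ t) t := fun t => (hψdiff t).hasDerivAt
  have hψd0 : ∀ t : ℝ, R < t ∨ t < -R → deriv ψ t = 0 := by
    intro t ht
    rcases ht with h | h
    · have he : ψ =ᶠ[nhds t] fun _ => -(1/2) := by
        filter_upwards [Ioi_mem_nhds h] with s hs
        exact hψp s (le_of_lt hs)
      rw [he.deriv_eq]
      exact deriv_const t _
    · have he : ψ =ᶠ[nhds t] fun _ => (1/2 : ℝ) := by
        filter_upwards [Iio_mem_nhds h] with s hs
        exact hψm s (le_of_lt hs)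
      rw [he.deriv_eq]
      exact deriv_const t _
  obtain ⟨S₁, hS₁⟩ := (isCompact_Icc (a := -R) (b := R)).exists_bound_of_continuousOn
    (hψ.continuous_deriv (by simp)).continuousOn
  set Sψ : ℝ := max S₁ 0 with hSψdef
  have hSψ0 : 0 ≤ Sψ := le_max_right _ _
  have hSψ : ∀ t : ℝ, |deriv ψ t| ≤ Sψ := by
    intro t
    rcases lt_or_ge t (-R) with h | h
    · rw [hψd0 t (Or.inr h)]; simpa using hSψ0
    rcases le_or_gt t R with h' | h'
    · exact (hS₁ t ⟨h, h'⟩).trans (le_max_left _ _)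
    · rw [hψd0 t (Or.inl h')]; simpa using hSψ0
  clear_value Sψ
  -- χ₀ bounds
  obtain ⟨Mχ, hMχ⟩ := hχs.exists_bound_of_continuous hχ.continuous
  simp only [Real.norm_eq_abs] at hMχ
  have hMχ0 : 0 ≤ Mχ := (abs_nonneg (χ₀ 0)).trans (hMχ 0)
  have hχd : ∀ x : ℝ, HasDerivAt χ₀ (deriv χ₀ x) x := fun x => ((hχ.differentiable (by simp)) x).hasDerivAt
  obtain ⟨Sχ, hSχ⟩ := (hχs.deriv).exists_bound_of_continuous (hχ.continuous_deriv (by simp))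
  simp only [Real.norm_eq_abs] at hSχ
  have hSχ0 : 0 ≤ Sχ := (abs_nonneg _).trans (hSχ 0)
  obtain ⟨A₀, hA₀⟩ := hχs.isBounded.subset_closedBall (0 : ℝ)
  have hχ0 : ∀ x : ℝ, A₀ < |x| → χ₀ x = 0 := by
    intro x hx
    apply image_eq_zero_of_notMem_tsupport
    intro hmem
    have := hA₀ hmem
    rw [Metric.mem_closedBall, Real.dist_eq, sub_zero] at this
    linarith
  have hχd0 : ∀ x : ℝ, A₀ < |x| → deriv χ₀ x = 0 := by
    intro x hx
    by_contra hne
    have hmem : x ∈ tsupport χ₀ := support_deriv_subset (by simpa [Function.mem_support] using hne)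
    have := hA₀ hmem
    rw [Metric.mem_closedBall, Real.dist_eq, sub_zero] at this
    linarith
  -- scales
  set T : ℝ := max (max A₀ δ) 1 with hTdef
  have hT1 : (1:ℝ) ≤ T := le_max_right _ _
  have hTδ : δ ≤ T := le_trans (le_max_right A₀ δ) (le_max_left _ _)
  have hTA : A₀ ≤ T := le_trans (le_max_left A₀ δ) (le_max_left _ _)
  clear_value T
  set ε₀ : ℝ := min (δ / (R + 1)) 1 / 2 with hε₀def
  have hε₀pos : 0 < ε₀ := by
    have : 0 < δ / (R + 1) := by positivity
    have : 0 < min (δ / (R + 1)) 1 := lt_min this one_pos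
    positivity
  have hε₀lt1 : ε₀ < 1 := by
    have : min (δ / (R + 1)) 1 ≤ 1 := min_le_right _ _
    rw [hε₀def]; linarith
  have hsmall : ∀ e : ℝ, 0 < e → e < ε₀ → e * (R + 1) < δ := by
    intro e he helt
    have h1 : ε₀ ≤ δ / (R + 1) := by
      rw [hε₀def]
      have := min_le_left (δ / (R + 1)) 1
      have h0 : 0 < δ / (R+1) := by positivity
      linarith
    have : e < δ / (R + 1) := lt_of_lt_of_le helt h1
    rw [lt_div_iff₀ (by linarith : (0:ℝ) < R + 1)] at this
    exact this
  have hψval : ∀ e : ℝ, 0 < e → e < ε₀ → ∀ x : ℝ, δ ≤ x → ψ (x / e) = -(1/2) := by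
    intro e he helt x hx
    apply hψp
    have h1 := hsmall e he helt
    rw [le_div_iff₀ he]
    have : e * (R + 1) = (R + 1) * e := by ring
    linarith
  have hψvalneg : ∀ e : ℝ, 0 < e → e < ε₀ → ∀ x : ℝ, x ≤ -δ → ψ (x / e) = 1/2 := by
    intro e he helt x hx
    apply hψm
    have h1 := hsmall e he helt
    rw [div_le_iff₀ he]
    have h2 : e * (R + 1) = R * e + e := by ring
    have h3 : -δ ≤ -(R * e) - e := by linarith
    linarith
  clear_value ε₀
  set ε₁ : ℝ := ε₀ / 2 with hε₁def
  have hε₁pos : 0 < ε₁ := by positivity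
  have hε₁lt : ε₁ < ε₀ := by rw [hε₁def]; linarith
  clear_value ε₁
  -- the two pieces
  set g : ℝ → ℝ := fun t => 2 * ψ t + 2 / π * arctan t with hgdef
  set r₀ : ℝ → ℝ := fun x => -(2 / π) * arctan x + 2 * ψ (x / ε₁) * (χ₀ x - 1) with hrdef
  have hdec : ∀ e : ℝ, 0 < e → e < ε₀ → ∀ x : ℝ, ω e x = g (x / e) + r₀ x := by
    intro e he helt x
    rw [hω, hζ]
    simp only [hgdef, hrdef]
    rcases lt_or_ge |x| δ with h | h
    · rw [hδ1 x h]; ring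
    · rcases le_abs.mp h with h' | h'
      · rw [hψval e he helt x h', hψval ε₁ hε₁pos hε₁lt x h']; ring
      · rw [hψvalneg e he helt x (by linarith), hψvalneg ε₁ hε₁pos hε₁lt x (by linarith)]; ring
  clear_value g r₀
  -- H1 for g
  set Tg : ℝ := max R 1 with hTgdef
  have hTg1 : (1:ℝ) ≤ Tg := le_max_right _ _
  have hTgR : R ≤ Tg := le_max_left _ _
  set Kg : ℝ := (2 * Mψ + 1) * (1 + Tg) + 2 with hKgdef
  have hKgprod : 0 ≤ (2 * Mψ + 1) * (1 + Tg) :=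
    mul_nonneg (by linarith) (by linarith)
  have hKg0 : 0 ≤ Kg := by rw [hKgdef]; linarith
  have hKg2 : 2 ≤ Kg := by rw [hKgdef]; linarith
  have hatan1 : ∀ t : ℝ, |2 / π * arctan t| ≤ 1 := by
    intro t
    rw [abs_mul, abs_of_pos (by positivity : (0:ℝ) < 2 / π)]
    have h := abs_lt.mpr ⟨neg_pi_div_two_lt_arctan t, arctan_lt_pi_div_two t⟩
    calc 2 / π * |arctan t| ≤ 2 / π * (π / 2) :=
          mul_le_mul_of_nonneg_left h.le (by positivity)
      _ = 1 := by field_simp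
  have hg1 : ∀ t : ℝ, |g t| ≤ Kg / (1 + |t|) := by
    intro t
    have habs : (0:ℝ) ≤ |t| := abs_nonneg t
    have hd1 : (0:ℝ) < 1 + |t| := by linarith
    rcases le_or_gt |t| Tg with h | h
    · have hb : |g t| ≤ 2 * Mψ + 1 := by
        simp only [hgdef]
        calc |2 * ψ t + 2 / π * arctan t| ≤ |2 * ψ t| + |2 / π * arctan t| := abs_add_le _ _
          _ ≤ 2 * Mψ + 1 := by
              have h1 : |2 * ψ t| = 2 * |ψ t| := by rw [abs_mul]; norm_num
              have := hMψ t; have := hatan1 t; linarith [h1.le, h1.ge]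
      rw [le_div_iff₀ hd1]
      calc |g t| * (1 + |t|) ≤ (2 * Mψ + 1) * (1 + Tg) :=
            mul_le_mul hb (by linarith) (by linarith) (by linarith)
        _ ≤ Kg := by rw [hKgdef]; linarith
    · rcases lt_abs.mp h with h' | h'
      · have hψt : ψ t = -(1/2) := hψp t (by linarith)
        have hgt : g t = 2 / π * arctan t - 1 := by simp only [hgdef]; rw [hψt]; ring
        rw [hgt]
        have htail := aux_arctan_tail (show (1:ℝ) ≤ t by linarith)
        calc |2 / π * arctan t - 1| ≤ 2 / (1 + t) := htail
          _ = 2 / (1 + |t|) := by rw [abs_of_pos (by linarith : (0:ℝ) < t)]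
          _ ≤ Kg / (1 + |t|) := by gcongr
      · have hψt : ψ t = 1/2 := hψm t (by linarith)
        have hneg : arctan t = -arctan (-t) := by rw [arctan_neg, neg_neg]
        have hgt : g t = -(2 / π * arctan (-t) - 1) := by
          simp only [hgdef]; rw [hψt, hneg]; ring
        rw [hgt, abs_neg]
        have htail := aux_arctan_tail (show (1:ℝ) ≤ -t by linarith)
        calc |2 / π * arctan (-t) - 1| ≤ 2 / (1 + -t) := htail
          _ = 2 / (1 + |t|) := by rw [abs_of_neg (by linarith : t < (0:ℝ))]
          _ ≤ Kg / (1 + |t|) := by gcongr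
  clear_value Tg Kg
  -- H2 for g
  set Lg : ℝ := 2 * Sψ * (1 + R ^ 2) + 1 with hLgdef
  have hLgprod : 0 ≤ 2 * Sψ * (1 + R ^ 2) :=
    mul_nonneg (by linarith) (by positivity)
  have hLg0 : 0 ≤ Lg := by rw [hLgdef]; linarith
  have hLg1 : 1 ≤ Lg := by rw [hLgdef]; linarith
  have hgd : ∀ t : ℝ, HasDerivAt g (2 * deriv ψ t + 2 / π * (1 / (1 + t ^ 2))) t := by
    intro t
    have h1 := (hψd t).const_mul 2
    have h2 := (Real.hasDerivAt_arctan t).const_mul (2 / π)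
    rw [hgdef]; exact h1.add h2
  have hgb : ∀ t : ℝ, |2 * deriv ψ t + 2 / π * (1 / (1 + t ^ 2))| ≤ Lg / (1 + t ^ 2) := by
    intro t
    have ht2 : (0:ℝ) < 1 + t ^ 2 := by positivity
    have harc : |2 / π * (1 / (1 + t ^ 2))| ≤ 1 / (1 + t ^ 2) := by
      rw [abs_of_pos (by positivity)]
      calc 2 / π * (1 / (1 + t ^ 2)) ≤ 1 * (1 / (1 + t ^ 2)) := by
            apply mul_le_mul_of_nonneg_right h2π (by positivity)
        _ = 1 / (1 + t ^ 2) := one_mul _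
    rcases le_or_gt |t| R with h | h
    · have h1 : |2 * deriv ψ t| ≤ 2 * Sψ := by
        rw [abs_mul]
        have := hSψ t
        norm_num
        linarith
      have ht2R : t ^ 2 ≤ R ^ 2 := by
        rw [← sq_abs t]
        exact pow_le_pow_left₀ (abs_nonneg t) h 2
      rw [le_div_iff₀ ht2]
      have habs2 := (abs_add_le (2 * deriv ψ t) (2 / π * (1 / (1 + t ^ 2)))).trans
        (add_le_add h1 harc)
      calc |2 * deriv ψ t + 2 / π * (1 / (1 + t ^ 2))| * (1 + t ^ 2)
          ≤ (2 * Sψ + 1 / (1 + t ^ 2)) * (1 + t ^ 2) :=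
            mul_le_mul_of_nonneg_right habs2 ht2.le
        _ = 2 * Sψ * (1 + t ^ 2) + 1 := by field_simp
        _ ≤ 2 * Sψ * (1 + R ^ 2) + 1 := by
            have := mul_le_mul_of_nonneg_left (by linarith : 1 + t ^ 2 ≤ 1 + R ^ 2)
              (by linarith : (0:ℝ) ≤ 2 * Sψ)
            linarith
        _ = Lg := by rw [hLgdef]
    · have h0 : deriv ψ t = 0 := by
        apply hψd0
        rcases lt_abs.mp h with h' | h'
        · exact Or.inl h'
        · exact Or.inr (by linarith)
      rw [h0]
      simp only [mul_zero, zero_add]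
      exact harc.trans (by gcongr)
  clear_value Lg
  have hgH2 := aux_H2 g _ Lg hgd hgb
  have hgstar := aux_L2 g Kg Lg hKg0 hLg0 hg1 hgH2
  -- H1 for r₀
  set Kr : ℝ := (1 + 2 * Mψ * (Mχ + 1)) * (1 + T) + 2 with hKrdef
  have hKrprod : 0 ≤ (1 + 2 * Mψ * (Mχ + 1)) * (1 + T) :=
    mul_nonneg (by linarith [mul_nonneg hMψ0 hMχ0]) (by linarith)
  have hKr0 : 0 ≤ Kr := by rw [hKrdef]; linarith
  have hKr2 : 2 ≤ Kr := by rw [hKrdef]; linarith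
  have hr1 : ∀ x : ℝ, |r₀ x| ≤ Kr / (1 + |x|) := by
    intro x
    have habs : (0:ℝ) ≤ |x| := abs_nonneg x
    have hd1 : (0:ℝ) < 1 + |x| := by linarith
    rcases le_or_gt |x| T with h | h
    · have hb : |r₀ x| ≤ 1 + 2 * Mψ * (Mχ + 1) := by
        simp only [hrdef]
        have h1 : |-(2 / π) * arctan x| = |2 / π * arctan x| := by
          rw [neg_mul, abs_neg]
        have h2 : |2 * ψ (x / ε₁) * (χ₀ x - 1)| ≤ 2 * Mψ * (Mχ + 1) := by
          rw [abs_mul, abs_mul]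
          have e1 : |(2:ℝ)| = 2 := by norm_num
          have e2 : |χ₀ x - 1| ≤ Mχ + 1 := by
            calc |χ₀ x - 1| ≤ |χ₀ x| + |(1:ℝ)| := abs_sub _ _
              _ ≤ Mχ + 1 := by rw [abs_one]; linarith [hMχ x]
          rw [e1]
          have e3 : 2 * |ψ (x / ε₁)| ≤ 2 * Mψ := by linarith [hMψ (x / ε₁)]
          exact mul_le_mul e3 e2 (abs_nonneg _) (by linarith)
        calc |-(2 / π) * arctan x + 2 * ψ (x / ε₁) * (χ₀ x - 1)|
            ≤ |-(2 / π) * arctan x| + |2 * ψ (x / ε₁) * (χ₀ x - 1)| := abs_add_le _ _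
          _ ≤ 1 + 2 * Mψ * (Mχ + 1) := by
              rw [h1]; have := hatan1 x; linarith
      rw [le_div_iff₀ hd1]
      calc |r₀ x| * (1 + |x|) ≤ (1 + 2 * Mψ * (Mχ + 1)) * (1 + T) :=
            mul_le_mul hb (by linarith) (by linarith)
              (by linarith [mul_nonneg hMψ0 hMχ0])
        _ ≤ Kr := by rw [hKrdef]; linarith
    · rcases lt_abs.mp h with h' | h'
      · have hc : χ₀ x = 0 := hχ0 x (by linarith)
        have hpv : ψ (x / ε₁) = -(1/2) := hψval ε₁ hε₁pos hε₁lt x (by linarith)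
        have hrx : r₀ x = -(2 / π * arctan x - 1) := by
          simp only [hrdef]; rw [hc, hpv]; ring
        rw [hrx, abs_neg]
        have htail := aux_arctan_tail (show (1:ℝ) ≤ x by linarith)
        calc |2 / π * arctan x - 1| ≤ 2 / (1 + x) := htail
          _ = 2 / (1 + |x|) := by rw [abs_of_pos (by linarith : (0:ℝ) < x)]
          _ ≤ Kr / (1 + |x|) := by gcongr
      · have hxneg : x < 0 := by linarith
        have hc : χ₀ x = 0 := hχ0 x (by rw [abs_of_neg hxneg]; linarith)
        have hpv : ψ (x / ε₁) = 1/2 := hψvalneg ε₁ hε₁pos hε₁lt x (by linarith)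
        have hneg : arctan x = -arctan (-x) := by rw [arctan_neg, neg_neg]
        have hrx : r₀ x = 2 / π * arctan (-x) - 1 := by
          simp only [hrdef]; rw [hc, hpv, hneg]; ring
        rw [hrx]
        have htail := aux_arctan_tail (show (1:ℝ) ≤ -x by linarith)
        calc |2 / π * arctan (-x) - 1| ≤ 2 / (1 + -x) := htail
          _ = 2 / (1 + |x|) := by rw [abs_of_neg hxneg]
          _ ≤ Kr / (1 + |x|) := by gcongr
  clear_value Kr
  -- H2 for r₀
  set B : ℝ := 1 + 2 * Sψ * (1 / ε₁) * (Mχ + 1) + 2 * Mψ * Sχ with hBdef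
  have hB0 : 0 ≤ B := by
    have h1 : 0 ≤ 2 * Sψ * (1 / ε₁) * (Mχ + 1) :=
      mul_nonneg (mul_nonneg (mul_nonneg (by norm_num : (0:ℝ) ≤ 2) hSψ0)
        (one_div_nonneg.mpr hε₁pos.le)) (by linarith)
    have h2 : 0 ≤ 2 * Mψ * Sχ := mul_nonneg (mul_nonneg (by norm_num : (0:ℝ) ≤ 2) hMψ0) hSχ0
    rw [hBdef]; linarith
  set Lr : ℝ := B * (1 + T ^ 2) + 1 with hLrdef
  have hLr0 : 0 ≤ Lr := by
    have := mul_nonneg hB0 (by positivity : (0:ℝ) ≤ 1 + T ^ 2)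
    rw [hLrdef]; linarith
  have hLr1 : 1 ≤ Lr := by
    have := mul_nonneg hB0 (by positivity : (0:ℝ) ≤ 1 + T ^ 2)
    rw [hLrdef]; linarith
  set r' : ℝ → ℝ := fun x => -(2 / π) * (1 / (1 + x ^ 2)) +
      (2 * (deriv ψ (x / ε₁) * (1 / ε₁)) * (χ₀ x - 1) +
        2 * ψ (x / ε₁) * deriv χ₀ x) with hr'def
  have hrd : ∀ x : ℝ, HasDerivAt r₀ (r' x) x := by
    intro x
    have h1 := (Real.hasDerivAt_arctan x).const_mul (-(2 / π))
    have hin : HasDerivAt (fun y : ℝ => y / ε₁) (1 / ε₁) x := by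
      simpa using (hasDerivAt_id x).div_const ε₁
    have hcomp : HasDerivAt (fun y : ℝ => ψ (y / ε₁)) (deriv ψ (x / ε₁) * (1 / ε₁)) x :=
      (hψd (x / ε₁)).comp x hin
    have h2 : HasDerivAt (fun y : ℝ => 2 * ψ (y / ε₁)) (2 * (deriv ψ (x / ε₁) * (1 / ε₁))) x :=
      hcomp.const_mul 2
    have h3 : HasDerivAt (fun y : ℝ => χ₀ y - 1) (deriv χ₀ x) x := (hχd x).sub_const 1
    have h4 := h2.mul h3
    have h5 := h1.add h4
    rw [hrdef]; exact h5
  have hrb : ∀ x : ℝ, |r' x| ≤ Lr / (1 + x ^ 2) := by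
    intro x
    have hx2 : (0:ℝ) < 1 + x ^ 2 := by positivity
    have harc : |-(2 / π) * (1 / (1 + x ^ 2))| ≤ 1 := by
      rw [neg_mul, abs_neg, abs_of_pos (by positivity)]
      calc 2 / π * (1 / (1 + x ^ 2)) ≤ 1 * (1 / (1 + x ^ 2)) :=
            mul_le_mul_of_nonneg_right h2π (by positivity)
        _ ≤ 1 := by rw [one_mul, div_le_one hx2]; linarith [sq_nonneg x]
    rcases le_or_gt |x| T with h | h
    · have hb1 : |2 * (deriv ψ (x / ε₁) * (1 / ε₁)) * (χ₀ x - 1)|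
          ≤ 2 * Sψ * (1 / ε₁) * (Mχ + 1) := by
        rw [abs_mul, abs_mul, abs_mul]
        have e1 : |(2:ℝ)| = 2 := by norm_num
        have e2 : |(1:ℝ) / ε₁| = 1 / ε₁ := abs_of_pos (by positivity)
        have e3 : |χ₀ x - 1| ≤ Mχ + 1 := by
          calc |χ₀ x - 1| ≤ |χ₀ x| + |(1:ℝ)| := abs_sub _ _
            _ ≤ Mχ + 1 := by rw [abs_one]; linarith [hMχ x]
        rw [e1, e2]
        have e4 : 2 * (|deriv ψ (x / ε₁)| * (1 / ε₁)) ≤ 2 * (Sψ * (1 / ε₁)) := by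
          have := hSψ (x / ε₁)
          have h1ε : (0:ℝ) ≤ 1 / ε₁ := by positivity
          linarith [mul_le_mul_of_nonneg_right this h1ε]
        calc 2 * (|deriv ψ (x / ε₁)| * (1 / ε₁)) * |χ₀ x - 1|
            ≤ 2 * (Sψ * (1 / ε₁)) * (Mχ + 1) := by
              apply mul_le_mul e4 e3 (abs_nonneg _) (by positivity)
          _ = 2 * Sψ * (1 / ε₁) * (Mχ + 1) := by ring
      have hb2 : |2 * ψ (x / ε₁) * deriv χ₀ x| ≤ 2 * Mψ * Sχ := by
        rw [abs_mul, abs_mul]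
        have e1 : |(2:ℝ)| = 2 := by norm_num
        rw [e1]
        have e3 : 2 * |ψ (x / ε₁)| ≤ 2 * Mψ := by linarith [hMψ (x / ε₁)]
        apply mul_le_mul e3 (hSχ x) (abs_nonneg _) (by linarith)
      have hbB : |r' x| ≤ B := by
        simp only [hr'def]
        calc |-(2 / π) * (1 / (1 + x ^ 2)) +
              (2 * (deriv ψ (x / ε₁) * (1 / ε₁)) * (χ₀ x - 1) +
                2 * ψ (x / ε₁) * deriv χ₀ x)|
            ≤ |-(2 / π) * (1 / (1 + x ^ 2))| +
              (|2 * (deriv ψ (x / ε₁) * (1 / ε₁)) * (χ₀ x - 1)| +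
                |2 * ψ (x / ε₁) * deriv χ₀ x|) := by
              refine (abs_add_le _ _).trans ?_
              gcongr
              exact abs_add_le _ _
          _ ≤ B := by rw [hBdef]; linarith
      rw [le_div_iff₀ hx2]
      have hT2 : x ^ 2 ≤ T ^ 2 := by
        rw [← sq_abs x]
        exact pow_le_pow_left₀ (abs_nonneg x) h 2
      calc |r' x| * (1 + x ^ 2) ≤ B * (1 + T ^ 2) :=
            mul_le_mul hbB (by linarith) (by positivity) hB0
        _ ≤ Lr := by rw [hLrdef]; linarith
    · have hδx : δ ≤ |x| := by linarith
      have hψ'0 : deriv ψ (x / ε₁) = 0 := by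
        apply hψd0
        have h1 := hsmall ε₁ hε₁pos hε₁lt
        rcases lt_abs.mp h with h' | h'
        · left
          rw [lt_div_iff₀ hε₁pos]
          have h2 : ε₁ * (R + 1) = R * ε₁ + ε₁ := by ring
          linarith
        · right
          rw [div_lt_iff₀ hε₁pos]
          have h2 : ε₁ * (R + 1) = R * ε₁ + ε₁ := by ring
          have h3 : -R * ε₁ = -(R * ε₁) := by ring
          linarith
      have hχ'0 : deriv χ₀ x = 0 := hχd0 x (by linarith)
      have hr'x : r' x = -(2 / π) * (1 / (1 + x ^ 2)) := by
        simp only [hr'def]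
        rw [hψ'0, hχ'0]
        ring
      rw [hr'x, le_div_iff₀ hx2]
      have hrec : |-(2 / π) * (1 / (1 + x ^ 2))| ≤ 1 / (1 + x ^ 2) := by
        rw [neg_mul, abs_neg, abs_of_pos (by positivity)]
        exact (mul_le_mul_of_nonneg_right h2π (by positivity)).trans_eq (one_mul _)
      calc |-(2 / π) * (1 / (1 + x ^ 2))| * (1 + x ^ 2)
          ≤ (1 / (1 + x ^ 2)) * (1 + x ^ 2) := mul_le_mul_of_nonneg_right hrec hx2.le
        _ = 1 := by field_simp
        _ ≤ Lr := hLr1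
  clear_value B Lr r'
  have hrH2 := aux_H2 r₀ r' Lr hrd hrb
  have hrstar := aux_L2 r₀ Kr Lr hKr0 hLr0 hr1 hrH2
  obtain ⟨Cg, hCgdef⟩ : ∃ c : ℝ, c = 9 * (Kg + Lg) := ⟨_, rfl⟩
  obtain ⟨Cr, hCrdef⟩ : ∃ c : ℝ, c = 9 * (Kr + Lr) := ⟨_, rfl⟩
  rw [← hCgdef] at hgstar
  rw [← hCrdef] at hrstar
  have hCg0 : 0 ≤ Cg := by rw [hCgdef]; linarith
  have hCr0 : 0 ≤ Cr := by rw [hCrdef]; linarith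
  refine ⟨ε₀, ⟨hε₀pos, hε₀lt1⟩, (4 * π * (Cg + Cr)) ^ 2, ?_⟩
  intro e he
  obtain ⟨he0, helt⟩ := he
  set p : ℝ → ℝ := fun z => 2 * (Cg + Cr) * (e / (e ^ 2 + z ^ 2) + 1 / (1 ^ 2 + z ^ 2))
    with hpdef
  have hqg : ∀ z : ℝ, 0 ≤ e / (e ^ 2 + z ^ 2) := fun z => div_nonneg he0.le (by positivity)
  have hq1 : ∀ z : ℝ, 0 ≤ 1 / (1 ^ 2 + z ^ 2) := fun z => by positivity
  have hp : ∀ z, 0 ≤ p z := by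
    intro z
    simp only [hpdef]
    exact mul_nonneg (by linarith) (add_nonneg (hqg z) (hq1 z))
  have hpi : Integrable p := by
    simp only [hpdef]
    exact ((aux_int he0).1.add (aux_int one_pos).1).const_mul _
  have hpint : (∫ z, p z) = 4 * π * (Cg + Cr) := by
    simp only [hpdef]
    rw [MeasureTheory.integral_const_mul, integral_add (aux_int he0).1 (aux_int one_pos).1,
      (aux_int he0).2, (aux_int one_pos).2]
    ring
  have hF : ∀ x y : ℝ, ((ω e x - ω e y) / (x - y)) ^ 2 ≤ p x * p y := by
    intro x y
    by_cases hxy : x = y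
    · subst hxy
      have h0 : ((ω e x - ω e x) / (x - x)) ^ 2 = 0 := by simp
      rw [h0]
      exact mul_nonneg (hp x) (hp x)
    · have hne : x - y ≠ 0 := sub_ne_zero.mpr hxy
      rw [div_pow, div_le_iff₀ (by positivity : (0:ℝ) < (x - y) ^ 2)]
      have hg2 := aux_sq g Cg hgstar he0 x y
      have hr2 := aux_sq r₀ Cr hrstar one_pos x y
      simp only [div_one] at hr2
      have hsum : (ω e x - ω e y) ^ 2
          ≤ 2 * (g (x / e) - g (y / e)) ^ 2 + 2 * (r₀ x - r₀ y) ^ 2 := by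
        rw [hdec e he0 helt x, hdec e he0 helt y]
        have e0 : g (x / e) + r₀ x - (g (y / e) + r₀ y)
            = (g (x / e) - g (y / e)) + (r₀ x - r₀ y) := by ring
        rw [e0]
        exact aux_two_sq _ _
      refine hsum.trans ?_
      have hcomb := aux_comb Cg Cr (e / (e ^ 2 + x ^ 2)) (1 / (1 ^ 2 + x ^ 2))
        (e / (e ^ 2 + y ^ 2)) (1 / (1 ^ 2 + y ^ 2)) ((x - y) ^ 2)
        hCg0 hCr0 (hqg x) (hq1 x) (hqg y) (hq1 y) (sq_nonneg _)
      calc 2 * (g (x / e) - g (y / e)) ^ 2 + 2 * (r₀ x - r₀ y) ^ 2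
          ≤ 2 * (Cg ^ 2 * (x - y) ^ 2 * (e / (e ^ 2 + x ^ 2) * (e / (e ^ 2 + y ^ 2))))
            + 2 * (Cr ^ 2 * (x - y) ^ 2 * (1 / (1 ^ 2 + x ^ 2) * (1 / (1 ^ 2 + y ^ 2)))) := by
            have u1 := mul_le_mul_of_nonneg_left hg2 (by norm_num : (0:ℝ) ≤ 2)
            have u2 := mul_le_mul_of_nonneg_left hr2 (by norm_num : (0:ℝ) ≤ 2)
            linarith
        _ ≤ 2 * (Cg + Cr) * (e / (e ^ 2 + x ^ 2) + 1 / (1 ^ 2 + x ^ 2))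
            * (2 * (Cg + Cr) * (e / (e ^ 2 + y ^ 2) + 1 / (1 ^ 2 + y ^ 2))) * (x - y) ^ 2 :=
            hcomb
        _ = p x * p y * (x - y) ^ 2 := by simp only [hpdef]
  calc (∫⁻ x : ℝ, ∫⁻ y : ℝ, ENNReal.ofReal (((ω e x - ω e y) / (x - y)) ^ 2))
      ≤ ENNReal.ofReal ((∫ z, p z) ^ 2) := aux_L1 p hp hpi (ω e) hF
    _ = ENNReal.ofReal ((4 * π * (Cg + Cr)) ^ 2) := by rw [hpint]
end
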